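/- arXiv:math/0511067 — 5 statements merged into one kernel-verified Lean document; each statement's English description precedes it below -/
import Mathlib

section
/- Let u : ℝⁿ × ℝ → ℝⁿ be a smooth divergence-free vector field, and let A : ℝⁿ × ℝ → ℝⁿ be smooth with each component satisfying ∂ₜA_i + (u·∇)A_i = 0. Let v, Γ : ℝⁿ × ℝ → ℝⁿ be smooth with ∂ₜv + (u·∇)v = Γ, let p : ℝⁿ × ℝ → ℝ be smooth, and set w = (∇A)ᵀ v − ∇p. Then w satisfies ∂ₜw + (u·∇)w + (∇u)ᵀ w + ∇q = (∇A)ᵀ Γ, where q = ∂ₜp + (u·∇)p. -/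
/-- Partial derivative of `f` at `x` in the `j`-th coordinate direction. -/
noncomputable def pd {d : ℕ} {E : Type*} [NormedAddCommGroup E] [NormedSpace ℝ E]
    (f : (Fin d → ℝ) → E) (x : Fin d → ℝ) (j : Fin d) : E :=
  fderiv ℝ f x (Pi.single j 1)

section Helpers

variable {d : ℕ} {F : (Fin d → ℝ) × ℝ → ℝ}

private lemma pd_slice (hF : ContDiff ℝ (⊤ : ℕ∞) F) (x : Fin d → ℝ) (t : ℝ) (i : Fin d) :
    pd (fun y => F (y, t)) x i = fderiv ℝ F (x, t) (Pi.single i 1, 0) := by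
  have h : HasFDerivAt (fun y => F (y, t))
      ((fderiv ℝ F (x, t)).comp (ContinuousLinearMap.inl ℝ (Fin d → ℝ) ℝ)) x :=
    (hF.differentiable (by simp) (x, t)).hasFDerivAt.comp x (hasFDerivAt_prodMk_left x t)
  rw [pd, h.fderiv]
  simp

private lemma hasDerivAt_slice (hF : ContDiff ℝ (⊤ : ℕ∞) F) (x : Fin d → ℝ) (t : ℝ) :
    HasDerivAt (fun s => F (x, s)) (fderiv ℝ F (x, t) (0, 1)) t := by
  have h : HasFDerivAt (fun s => F (x, s))
      ((fderiv ℝ F (x, t)).comp (ContinuousLinearMap.inr ℝ (Fin d → ℝ) ℝ)) t :=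
    (hF.differentiable (by simp) (x, t)).hasFDerivAt.comp t (hasFDerivAt_prodMk_right x t)
  simpa using h.hasDerivAt

private lemma deriv_slice (hF : ContDiff ℝ (⊤ : ℕ∞) F) (x : Fin d → ℝ) (t : ℝ) :
    deriv (fun s => F (x, s)) t = fderiv ℝ F (x, t) (0, 1) :=
  (hasDerivAt_slice hF x t).deriv

private lemma contDiff_dF (hF : ContDiff ℝ (⊤ : ℕ∞) F) (m : (Fin d → ℝ) × ℝ) :
    ContDiff ℝ (⊤ : ℕ∞) fun z => fderiv ℝ F z m :=
  (hF.fderiv_right (by simp)).clm_apply contDiff_const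

private lemma fderiv_swap (hF : ContDiff ℝ (⊤ : ℕ∞) F) (z m n : (Fin d → ℝ) × ℝ) :
    fderiv ℝ (fun w => fderiv ℝ F w m) z n = fderiv ℝ (fun w => fderiv ℝ F w n) z m := by
  have hf' : ContDiff ℝ (⊤ : ℕ∞) (fderiv ℝ F) := hF.fderiv_right (by simp)
  have key : ∀ m n : (Fin d → ℝ) × ℝ, fderiv ℝ (fun w => fderiv ℝ F w m) z n
      = fderiv ℝ (fderiv ℝ F) z n m := by
    intro m n
    have h : HasFDerivAt (fun w => fderiv ℝ F w m)
        ((ContinuousLinearMap.apply ℝ ℝ m).comp (fderiv ℝ (fderiv ℝ F) z)) z :=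
      (ContinuousLinearMap.apply ℝ ℝ m).hasFDerivAt.comp z
        (hf'.differentiable (by simp) z).hasFDerivAt
    rw [h.fderiv]
    rfl
  rw [key, key]
  exact second_derivative_symmetric (fun w => (hF.differentiable (by simp) w).hasFDerivAt)
    (hf'.differentiable (by simp) z).hasFDerivAt n m

private lemma hasFDerivAt_sum_mul {c g : Fin d → ((Fin d → ℝ) × ℝ → ℝ)}
    (hc : ∀ k, ContDiff ℝ (⊤ : ℕ∞) (c k)) (hg : ∀ k, ContDiff ℝ (⊤ : ℕ∞) (g k))
    (z : (Fin d → ℝ) × ℝ) :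
    HasFDerivAt (fun w => ∑ k, c k w * g k w)
      (∑ k, (c k z • fderiv ℝ (g k) z + g k z • fderiv ℝ (c k) z)) z :=
  HasFDerivAt.fun_sum fun k _ =>
    ((hc k).differentiable (by simp) z).hasFDerivAt.mul ((hg k).differentiable (by simp) z).hasFDerivAt

private lemma fderiv_sum_mul {c g : Fin d → ((Fin d → ℝ) × ℝ → ℝ)}
    (hc : ∀ k, ContDiff ℝ (⊤ : ℕ∞) (c k)) (hg : ∀ k, ContDiff ℝ (⊤ : ℕ∞) (g k))
    (z η : (Fin d → ℝ) × ℝ) :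
    fderiv ℝ (fun w => ∑ k, c k w * g k w) z η
      = ∑ k, (fderiv ℝ (c k) z η * g k z + c k z * fderiv ℝ (g k) z η) := by
  rw [(hasFDerivAt_sum_mul hc hg z).fderiv, ContinuousLinearMap.sum_apply]
  refine Finset.sum_congr rfl fun k _ => ?_
  simp only [ContinuousLinearMap.add_apply, ContinuousLinearMap.coe_smul', Pi.smul_apply,
    smul_eq_mul]
  ring

/-- Pure algebra step. -/
private lemma weber_algebra
    (U V G Wv a dVt dP dU bA cP : Fin d → ℝ) (bP : ℝ)
    (dVx dAx cA : Fin d → Fin d → ℝ)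
    (h1 : ∀ j, dVt j + ∑ k, U k * dVx j k = G j)
    (h2 : ∀ j, bA j + ∑ k, (dU k * dAx j k + U k * cA j k) = 0)
    (h3 : ∀ k, Wv k = (∑ j, V j * dAx j k) - dP k) :
    ((∑ j, (dVt j * a j + V j * bA j)) - bP)
      + (∑ k, U k * ((∑ j, (dVx j k * a j + V j * cA j k)) - cP k))
      + (∑ k, dU k * Wv k)
      + (bP + ∑ k, (dU k * dP k + U k * cP k))
    = ∑ j, G j * a j := by
  have H1 : ∑ j, (dVt j + ∑ k, U k * dVx j k) * a j = ∑ j, G j * a j :=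
    Finset.sum_congr rfl fun j _ => by rw [h1]
  have H2 : ∑ j, V j * (bA j + ∑ k, (dU k * dAx j k + U k * cA j k)) = 0 :=
    Finset.sum_eq_zero fun j _ => by rw [h2, mul_zero]
  have hT1 : ∑ j, (dVt j * a j + V j * bA j)
      = (∑ j, dVt j * a j) + ∑ j, V j * bA j := Finset.sum_add_distrib
  have hT2 : (∑ k, U k * ((∑ j, (dVx j k * a j + V j * cA j k)) - cP k))
      = ((∑ j, ∑ k, U k * (dVx j k * a j)) + (∑ j, ∑ k, U k * (V j * cA j k)))
        - ∑ k, U k * cP k := by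
    simp only [mul_sub, Finset.mul_sum, mul_add, Finset.sum_sub_distrib,
      Finset.sum_add_distrib]
    rw [Finset.sum_comm (f := fun k j => U k * (dVx j k * a j)),
      Finset.sum_comm (f := fun k j => U k * (V j * cA j k))]
  have hT3 : (∑ k, dU k * Wv k)
      = (∑ j, ∑ k, dU k * (V j * dAx j k)) - ∑ k, dU k * dP k := by
    simp only [h3, mul_sub, Finset.mul_sum, Finset.sum_sub_distrib]
    rw [Finset.sum_comm (f := fun k j => dU k * (V j * dAx j k))]
  have hT4 : (∑ k, (dU k * dP k + U k * cP k))
      = (∑ k, dU k * dP k) + ∑ k, U k * cP k := Finset.sum_add_distrib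
  have H1' : (∑ j, dVt j * a j) + (∑ j, ∑ k, U k * (dVx j k * a j))
      = ∑ j, G j * a j := by
    rw [← H1, ← Finset.sum_add_distrib]
    refine Finset.sum_congr rfl fun j _ => ?_
    rw [add_mul, Finset.sum_mul]
    congr 1
    exact Finset.sum_congr rfl fun k _ => by ring
  have H2' : (∑ j, V j * bA j) + ((∑ j, ∑ k, dU k * (V j * dAx j k))
      + (∑ j, ∑ k, U k * (V j * cA j k))) = 0 := by
    rw [← H2, ← Finset.sum_add_distrib, ← Finset.sum_add_distrib]
    refine Finset.sum_congr rfl fun j _ => ?_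
    rw [mul_add, Finset.mul_sum]
    congr 1
    rw [← Finset.sum_add_distrib]
    exact Finset.sum_congr rfl fun k _ => by ring
  rw [hT1, hT2, hT3, hT4]
  linarith [H1', H2']

end Helpers

/-- Evolution of the Weber velocity: if `∂ₜA + (u·∇)A = 0` componentwise,
`∂ₜv + (u·∇)v = Γ`, and `w = (∇A)ᵀ v − ∇p`, then
`∂ₜw + (u·∇)w + (∇u)ᵀ w + ∇q = (∇A)ᵀ Γ` with `q = ∂ₜp + (u·∇)p`. -/
theorem weber_velocity_evolution {d : ℕ}
    (u A v Γ : (Fin d → ℝ) → ℝ → Fin d → ℝ)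
    (p : (Fin d → ℝ) → ℝ → ℝ)
    (w : (Fin d → ℝ) → ℝ → Fin d → ℝ)
    (q : (Fin d → ℝ) → ℝ → ℝ)
    (hu : ContDiff ℝ (⊤ : ℕ∞) (fun z : (Fin d → ℝ) × ℝ => u z.1 z.2))
    (hdiv : ∀ x t, ∑ i, pd (fun y => u y t i) x i = 0)
    (hA : ContDiff ℝ (⊤ : ℕ∞) (fun z : (Fin d → ℝ) × ℝ => A z.1 z.2))
    (htrans : ∀ (x : Fin d → ℝ) (t : ℝ) (i : Fin d),
      deriv (fun s => A x s i) t + ∑ j, u x t j * pd (fun y => A y t i) x j = 0)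
    (hv : ContDiff ℝ (⊤ : ℕ∞) (fun z : (Fin d → ℝ) × ℝ => v z.1 z.2))
    (hΓ : ContDiff ℝ (⊤ : ℕ∞) (fun z : (Fin d → ℝ) × ℝ => Γ z.1 z.2))
    (hvev : ∀ (x : Fin d → ℝ) (t : ℝ) (i : Fin d),
      deriv (fun s => v x s i) t + ∑ j, u x t j * pd (fun y => v y t i) x j = Γ x t i)
    (hp : ContDiff ℝ (⊤ : ℕ∞) (fun z : (Fin d → ℝ) × ℝ => p z.1 z.2))
    (hw : ∀ x t i, w x t i
      = (∑ j, v x t j * pd (fun y => A y t j) x i) - pd (fun y => p y t) x i)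
    (hq : ∀ x t, q x t
      = deriv (fun s => p x s) t + ∑ j, u x t j * pd (fun y => p y t) x j) :
    ∀ (x : Fin d → ℝ) (t : ℝ) (i : Fin d),
      deriv (fun s => w x s i) t
          + ∑ j, u x t j * pd (fun y => w y t i) x j
          + ∑ j, pd (fun y => u y t j) x i * w x t j
          + pd (fun y => q y t) x i
        = ∑ j, Γ x t j * pd (fun y => A y t j) x i := by
  intro x t i
  classical
  -- componentwise smoothness of the joint functions
  have hAj : ∀ j, ContDiff ℝ (⊤ : ℕ∞) fun z : (Fin d → ℝ) × ℝ => A z.1 z.2 j :=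
    fun j => contDiff_pi.mp hA j
  have huj : ∀ j, ContDiff ℝ (⊤ : ℕ∞) fun z : (Fin d → ℝ) × ℝ => u z.1 z.2 j :=
    fun j => contDiff_pi.mp hu j
  have hvj : ∀ j, ContDiff ℝ (⊤ : ℕ∞) fun z : (Fin d → ℝ) × ℝ => v z.1 z.2 j :=
    fun j => contDiff_pi.mp hv j
  -- conversion of slice derivatives to joint fderivs
  have cAx : ∀ (y : Fin d → ℝ) (s : ℝ) (j k : Fin d),
      pd (fun y' => A y' s j) y k
        = fderiv ℝ (fun z : (Fin d → ℝ) × ℝ => A z.1 z.2 j) (y, s) (Pi.single k 1, 0) :=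
    fun y s j k => pd_slice (hAj j) y s k
  have cux : ∀ (y : Fin d → ℝ) (s : ℝ) (j k : Fin d),
      pd (fun y' => u y' s j) y k
        = fderiv ℝ (fun z : (Fin d → ℝ) × ℝ => u z.1 z.2 j) (y, s) (Pi.single k 1, 0) :=
    fun y s j k => pd_slice (huj j) y s k
  have cvx : ∀ (y : Fin d → ℝ) (s : ℝ) (j k : Fin d),
      pd (fun y' => v y' s j) y k
        = fderiv ℝ (fun z : (Fin d → ℝ) × ℝ => v z.1 z.2 j) (y, s) (Pi.single k 1, 0) :=
    fun y s j k => pd_slice (hvj j) y s k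
  have cpx : ∀ (y : Fin d → ℝ) (s : ℝ) (k : Fin d),
      pd (fun y' => p y' s) y k
        = fderiv ℝ (fun z : (Fin d → ℝ) × ℝ => p z.1 z.2) (y, s) (Pi.single k 1, 0) :=
    fun y s k => pd_slice hp y s k
  have cAt : ∀ (y : Fin d → ℝ) (s : ℝ) (j : Fin d),
      deriv (fun s' => A y s' j) s
        = fderiv ℝ (fun z : (Fin d → ℝ) × ℝ => A z.1 z.2 j) (y, s) (0, 1) :=
    fun y s j => deriv_slice (hAj j) y s
  have cvt : ∀ (y : Fin d → ℝ) (s : ℝ) (j : Fin d),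
      deriv (fun s' => v y s' j) s
        = fderiv ℝ (fun z : (Fin d → ℝ) × ℝ => v z.1 z.2 j) (y, s) (0, 1) :=
    fun y s j => deriv_slice (hvj j) y s
  have cpt : ∀ (y : Fin d → ℝ) (s : ℝ),
      deriv (fun s' => p y s') s
        = fderiv ℝ (fun z : (Fin d → ℝ) × ℝ => p z.1 z.2) (y, s) (0, 1) :=
    fun y s => deriv_slice hp y s
  -- h1 : the evolution equation for v, in joint form
  have h1 : ∀ j : Fin d,
      fderiv ℝ (fun z : (Fin d → ℝ) × ℝ => v z.1 z.2 j) (x, t) (0, 1)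
        + ∑ k, u x t k * fderiv ℝ (fun z : (Fin d → ℝ) × ℝ => v z.1 z.2 j) (x, t)
            (Pi.single k 1, 0)
      = Γ x t j := by
    intro j
    have h := hvev x t j
    rw [cvt x t j] at h
    simp only [cvx] at h
    exact h
  -- h3 : the definition of w, in joint form
  have h3 : ∀ k : Fin d,
      w x t k = (∑ j, v x t j * fderiv ℝ (fun z : (Fin d → ℝ) × ℝ => A z.1 z.2 j) (x, t)
          (Pi.single k 1, 0))
        - fderiv ℝ (fun z : (Fin d → ℝ) × ℝ => p z.1 z.2) (x, t) (Pi.single k 1, 0) := by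
    intro k
    have h := hw x t k
    rw [cpx] at h
    simp only [cAx] at h
    exact h
  -- h2 : differentiated transport equation for A, with symmetric derivatives swapped
  have h2 : ∀ j : Fin d,
      fderiv ℝ (fun z : (Fin d → ℝ) × ℝ =>
          fderiv ℝ (fun z' : (Fin d → ℝ) × ℝ => A z'.1 z'.2 j) z (Pi.single i 1, 0)) (x, t)
          (0, 1)
        + ∑ k, (fderiv ℝ (fun z : (Fin d → ℝ) × ℝ => u z.1 z.2 k) (x, t) (Pi.single i 1, 0)
              * fderiv ℝ (fun z' : (Fin d → ℝ) × ℝ => A z'.1 z'.2 j) (x, t) (Pi.single k 1, 0)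
            + u x t k * fderiv ℝ (fun z : (Fin d → ℝ) × ℝ =>
                fderiv ℝ (fun z' : (Fin d → ℝ) × ℝ => A z'.1 z'.2 j) z (Pi.single i 1, 0))
                (x, t) (Pi.single k 1, 0)) = 0 := by
    intro j
    have hg1 : ContDiff ℝ (⊤ : ℕ∞) fun z : (Fin d → ℝ) × ℝ =>
        fderiv ℝ (fun z' : (Fin d → ℝ) × ℝ => A z'.1 z'.2 j) z (0, 1) :=
      contDiff_dF (hAj j) _
    have hgk : ∀ k : Fin d, ContDiff ℝ (⊤ : ℕ∞) fun z : (Fin d → ℝ) × ℝ =>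
        fderiv ℝ (fun z' : (Fin d → ℝ) × ℝ => A z'.1 z'.2 j) z (Pi.single k 1, 0) :=
      fun k => contDiff_dF (hAj j) _
    have hsum : ContDiff ℝ (⊤ : ℕ∞) fun z : (Fin d → ℝ) × ℝ =>
        ∑ k, u z.1 z.2 k * fderiv ℝ (fun z' : (Fin d → ℝ) × ℝ => A z'.1 z'.2 j) z
          (Pi.single k 1, 0) :=
      ContDiff.sum fun k _ => (huj k).mul (hgk k)
    have hzero : (fun z : (Fin d → ℝ) × ℝ =>
        fderiv ℝ (fun z' : (Fin d → ℝ) × ℝ => A z'.1 z'.2 j) z (0, 1)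
          + ∑ k, u z.1 z.2 k * fderiv ℝ (fun z' : (Fin d → ℝ) × ℝ => A z'.1 z'.2 j) z
              (Pi.single k 1, 0))
        = fun _ => (0 : ℝ) := by
      funext z
      have h := htrans z.1 z.2 j
      rw [cAt z.1 z.2 j] at h
      simp only [cAx] at h
      exact h
    have hD : HasFDerivAt (fun z : (Fin d → ℝ) × ℝ =>
        fderiv ℝ (fun z' : (Fin d → ℝ) × ℝ => A z'.1 z'.2 j) z (0, 1)
          + ∑ k, u z.1 z.2 k * fderiv ℝ (fun z' : (Fin d → ℝ) × ℝ => A z'.1 z'.2 j) z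
              (Pi.single k 1, 0))
        (fderiv ℝ (fun z : (Fin d → ℝ) × ℝ =>
            fderiv ℝ (fun z' : (Fin d → ℝ) × ℝ => A z'.1 z'.2 j) z (0, 1)) (x, t)
          + fderiv ℝ (fun z : (Fin d → ℝ) × ℝ =>
              ∑ k, u z.1 z.2 k * fderiv ℝ (fun z' : (Fin d → ℝ) × ℝ => A z'.1 z'.2 j) z
                (Pi.single k 1, 0)) (x, t)) (x, t) :=
      ((hg1.differentiable (by simp) (x, t)).hasFDerivAt).add
        ((hsum.differentiable (by simp) (x, t)).hasFDerivAt)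
    have h0 : HasFDerivAt (fun z : (Fin d → ℝ) × ℝ =>
        fderiv ℝ (fun z' : (Fin d → ℝ) × ℝ => A z'.1 z'.2 j) z (0, 1)
          + ∑ k, u z.1 z.2 k * fderiv ℝ (fun z' : (Fin d → ℝ) × ℝ => A z'.1 z'.2 j) z
              (Pi.single k 1, 0)) (0 : (Fin d → ℝ) × ℝ →L[ℝ] ℝ) (x, t) := by
      rw [hzero]
      exact hasFDerivAt_const 0 (x, t)
    have e0 := DFunLike.congr_fun (hD.unique h0) ((Pi.single i 1 : Fin d → ℝ), (0 : ℝ))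
    simp only [ContinuousLinearMap.add_apply, ContinuousLinearMap.zero_apply] at e0
    rw [fderiv_sum_mul huj hgk (x, t) (Pi.single i 1, 0)] at e0
    rw [fderiv_swap (hAj j) (x, t) (0, 1) (Pi.single i 1, 0)] at e0
    have e1 : ∑ k, (fderiv ℝ (fun z : (Fin d → ℝ) × ℝ => u z.1 z.2 k) (x, t)
            (Pi.single i 1, 0)
          * fderiv ℝ (fun z' : (Fin d → ℝ) × ℝ => A z'.1 z'.2 j) (x, t) (Pi.single k 1, 0)
        + u x t k * fderiv ℝ (fun z : (Fin d → ℝ) × ℝ =>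
            fderiv ℝ (fun z' : (Fin d → ℝ) × ℝ => A z'.1 z'.2 j) z (Pi.single i 1, 0))
            (x, t) (Pi.single k 1, 0))
        = ∑ k, (fderiv ℝ (fun z : (Fin d → ℝ) × ℝ => u z.1 z.2 k) (x, t)
            (Pi.single i 1, 0)
          * fderiv ℝ (fun z' : (Fin d → ℝ) × ℝ => A z'.1 z'.2 j) (x, t) (Pi.single k 1, 0)
        + u x t k * fderiv ℝ (fun z : (Fin d → ℝ) × ℝ =>
            fderiv ℝ (fun z' : (Fin d → ℝ) × ℝ => A z'.1 z'.2 j) z (Pi.single k 1, 0))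
            (x, t) (Pi.single i 1, 0)) :=
      Finset.sum_congr rfl fun k _ => by
        rw [fderiv_swap (hAj j) (x, t) (Pi.single i 1, 0) (Pi.single k 1, 0)]
    rw [e1]
    exact e0
  -- expansion of the fderiv of the joint function representing w in direction η
  have hgA : ∀ j : Fin d, ContDiff ℝ (⊤ : ℕ∞) fun z : (Fin d → ℝ) × ℝ =>
      fderiv ℝ (fun z' : (Fin d → ℝ) × ℝ => A z'.1 z'.2 j) z (Pi.single i 1, 0) :=
    fun j => contDiff_dF (hAj j) _
  have hgP : ContDiff ℝ (⊤ : ℕ∞) fun z : (Fin d → ℝ) × ℝ =>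
      fderiv ℝ (fun z' : (Fin d → ℝ) × ℝ => p z'.1 z'.2) z (Pi.single i 1, 0) :=
    contDiff_dF hp _
  have hWsum : ContDiff ℝ (⊤ : ℕ∞) fun z : (Fin d → ℝ) × ℝ =>
      ∑ j, v z.1 z.2 j * fderiv ℝ (fun z' : (Fin d → ℝ) × ℝ => A z'.1 z'.2 j) z
        (Pi.single i 1, 0) :=
    ContDiff.sum fun j _ => (hvj j).mul (hgA j)
  have hW : ContDiff ℝ (⊤ : ℕ∞) fun z : (Fin d → ℝ) × ℝ =>
      (∑ j, v z.1 z.2 j * fderiv ℝ (fun z' : (Fin d → ℝ) × ℝ => A z'.1 z'.2 j) z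
        (Pi.single i 1, 0))
      - fderiv ℝ (fun z' : (Fin d → ℝ) × ℝ => p z'.1 z'.2) z (Pi.single i 1, 0) :=
    hWsum.sub hgP
  have hfW : ∀ η : (Fin d → ℝ) × ℝ,
      fderiv ℝ (fun z : (Fin d → ℝ) × ℝ =>
        (∑ j, v z.1 z.2 j * fderiv ℝ (fun z' : (Fin d → ℝ) × ℝ => A z'.1 z'.2 j) z
          (Pi.single i 1, 0))
        - fderiv ℝ (fun z' : (Fin d → ℝ) × ℝ => p z'.1 z'.2) z (Pi.single i 1, 0)) (x, t) η
      = (∑ j, (fderiv ℝ (fun z : (Fin d → ℝ) × ℝ => v z.1 z.2 j) (x, t) η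
            * fderiv ℝ (fun z' : (Fin d → ℝ) × ℝ => A z'.1 z'.2 j) (x, t) (Pi.single i 1, 0)
          + v x t j * fderiv ℝ (fun z : (Fin d → ℝ) × ℝ =>
              fderiv ℝ (fun z' : (Fin d → ℝ) × ℝ => A z'.1 z'.2 j) z (Pi.single i 1, 0))
              (x, t) η))
        - fderiv ℝ (fun z : (Fin d → ℝ) × ℝ =>
            fderiv ℝ (fun z' : (Fin d → ℝ) × ℝ => p z'.1 z'.2) z (Pi.single i 1, 0))
            (x, t) η := by
    intro η
    rw [fderiv_fun_sub (hWsum.differentiable (by simp) (x, t)) (hgP.differentiable (by simp) (x, t))]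
    rw [ContinuousLinearMap.sub_apply]
    rw [fderiv_sum_mul hvj hgA (x, t) η]
  -- the function s ↦ w x s i and y ↦ w y t i in joint form
  have hwfun_t : (fun s : ℝ => w x s i)
      = fun s : ℝ => (∑ j, v x s j * fderiv ℝ (fun z' : (Fin d → ℝ) × ℝ => A z'.1 z'.2 j)
          (x, s) (Pi.single i 1, 0))
        - fderiv ℝ (fun z' : (Fin d → ℝ) × ℝ => p z'.1 z'.2) (x, s) (Pi.single i 1, 0) := by
    funext s
    rw [hw x s i, cpx]
    simp only [cAx]
  have hwfun_x : (fun y : Fin d → ℝ => w y t i)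
      = fun y : Fin d → ℝ => (∑ j, v y t j *
          fderiv ℝ (fun z' : (Fin d → ℝ) × ℝ => A z'.1 z'.2 j) (y, t) (Pi.single i 1, 0))
        - fderiv ℝ (fun z' : (Fin d → ℝ) × ℝ => p z'.1 z'.2) (y, t) (Pi.single i 1, 0) := by
    funext y
    rw [hw y t i, cpx]
    simp only [cAx]
  have hderw : deriv (fun s => w x s i) t
      = (∑ j, (fderiv ℝ (fun z : (Fin d → ℝ) × ℝ => v z.1 z.2 j) (x, t) (0, 1)
            * fderiv ℝ (fun z' : (Fin d → ℝ) × ℝ => A z'.1 z'.2 j) (x, t) (Pi.single i 1, 0)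
          + v x t j * fderiv ℝ (fun z : (Fin d → ℝ) × ℝ =>
              fderiv ℝ (fun z' : (Fin d → ℝ) × ℝ => A z'.1 z'.2 j) z (Pi.single i 1, 0))
              (x, t) (0, 1)))
        - fderiv ℝ (fun z : (Fin d → ℝ) × ℝ =>
            fderiv ℝ (fun z' : (Fin d → ℝ) × ℝ => p z'.1 z'.2) z (Pi.single i 1, 0))
            (x, t) (0, 1) := by
    rw [hwfun_t]
    rw [show deriv (fun s : ℝ => (∑ j, v x s j *
          fderiv ℝ (fun z' : (Fin d → ℝ) × ℝ => A z'.1 z'.2 j) (x, s) (Pi.single i 1, 0))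
        - fderiv ℝ (fun z' : (Fin d → ℝ) × ℝ => p z'.1 z'.2) (x, s) (Pi.single i 1, 0)) t
      = fderiv ℝ (fun z : (Fin d → ℝ) × ℝ =>
          (∑ j, v z.1 z.2 j * fderiv ℝ (fun z' : (Fin d → ℝ) × ℝ => A z'.1 z'.2 j) z
            (Pi.single i 1, 0))
          - fderiv ℝ (fun z' : (Fin d → ℝ) × ℝ => p z'.1 z'.2) z (Pi.single i 1, 0))
          (x, t) (0, 1) from deriv_slice hW x t]
    exact hfW (0, 1)
  have hpdw : ∀ k : Fin d, pd (fun y => w y t i) x k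
      = (∑ j, (fderiv ℝ (fun z : (Fin d → ℝ) × ℝ => v z.1 z.2 j) (x, t) (Pi.single k 1, 0)
            * fderiv ℝ (fun z' : (Fin d → ℝ) × ℝ => A z'.1 z'.2 j) (x, t) (Pi.single i 1, 0)
          + v x t j * fderiv ℝ (fun z : (Fin d → ℝ) × ℝ =>
              fderiv ℝ (fun z' : (Fin d → ℝ) × ℝ => A z'.1 z'.2 j) z (Pi.single i 1, 0))
              (x, t) (Pi.single k 1, 0)))
        - fderiv ℝ (fun z : (Fin d → ℝ) × ℝ =>
            fderiv ℝ (fun z' : (Fin d → ℝ) × ℝ => p z'.1 z'.2) z (Pi.single i 1, 0))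
            (x, t) (Pi.single k 1, 0) := by
    intro k
    rw [hwfun_x]
    rw [show pd (fun y : Fin d → ℝ => (∑ j, v y t j *
          fderiv ℝ (fun z' : (Fin d → ℝ) × ℝ => A z'.1 z'.2 j) (y, t) (Pi.single i 1, 0))
        - fderiv ℝ (fun z' : (Fin d → ℝ) × ℝ => p z'.1 z'.2) (y, t) (Pi.single i 1, 0)) x k
      = fderiv ℝ (fun z : (Fin d → ℝ) × ℝ =>
          (∑ j, v z.1 z.2 j * fderiv ℝ (fun z' : (Fin d → ℝ) × ℝ => A z'.1 z'.2 j) z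
            (Pi.single i 1, 0))
          - fderiv ℝ (fun z' : (Fin d → ℝ) × ℝ => p z'.1 z'.2) z (Pi.single i 1, 0))
          (x, t) (Pi.single k 1, 0) from pd_slice hW x t k]
    exact hfW (Pi.single k 1, 0)
  -- expansion of pd q
  have hgq : ∀ k : Fin d, ContDiff ℝ (⊤ : ℕ∞) fun z : (Fin d → ℝ) × ℝ =>
      fderiv ℝ (fun z' : (Fin d → ℝ) × ℝ => p z'.1 z'.2) z (Pi.single k 1, 0) :=
    fun k => contDiff_dF hp _
  have hgqt : ContDiff ℝ (⊤ : ℕ∞) fun z : (Fin d → ℝ) × ℝ =>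
      fderiv ℝ (fun z' : (Fin d → ℝ) × ℝ => p z'.1 z'.2) z (0, 1) := contDiff_dF hp _
  have hqsum : ContDiff ℝ (⊤ : ℕ∞) fun z : (Fin d → ℝ) × ℝ =>
      ∑ k, u z.1 z.2 k * fderiv ℝ (fun z' : (Fin d → ℝ) × ℝ => p z'.1 z'.2) z
        (Pi.single k 1, 0) :=
    ContDiff.sum fun k _ => (huj k).mul (hgq k)
  have hG : ContDiff ℝ (⊤ : ℕ∞) fun z : (Fin d → ℝ) × ℝ =>
      fderiv ℝ (fun z' : (Fin d → ℝ) × ℝ => p z'.1 z'.2) z (0, 1)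
        + ∑ k, u z.1 z.2 k * fderiv ℝ (fun z' : (Fin d → ℝ) × ℝ => p z'.1 z'.2) z
            (Pi.single k 1, 0) := hgqt.add hqsum
  have hqfun : (fun y : Fin d → ℝ => q y t)
      = fun y : Fin d → ℝ => fderiv ℝ (fun z' : (Fin d → ℝ) × ℝ => p z'.1 z'.2) (y, t) (0, 1)
        + ∑ k, u y t k * fderiv ℝ (fun z' : (Fin d → ℝ) × ℝ => p z'.1 z'.2) (y, t)
            (Pi.single k 1, 0) := by
    funext y
    rw [hq y t, cpt y t]
    simp only [cpx]
  have hpdq : pd (fun y => q y t) x i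
      = fderiv ℝ (fun z : (Fin d → ℝ) × ℝ =>
          fderiv ℝ (fun z' : (Fin d → ℝ) × ℝ => p z'.1 z'.2) z (Pi.single i 1, 0))
          (x, t) (0, 1)
        + ∑ k, (fderiv ℝ (fun z : (Fin d → ℝ) × ℝ => u z.1 z.2 k) (x, t) (Pi.single i 1, 0)
            * fderiv ℝ (fun z' : (Fin d → ℝ) × ℝ => p z'.1 z'.2) (x, t) (Pi.single k 1, 0)
          + u x t k * fderiv ℝ (fun z : (Fin d → ℝ) × ℝ =>
              fderiv ℝ (fun z' : (Fin d → ℝ) × ℝ => p z'.1 z'.2) z (Pi.single i 1, 0))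
              (x, t) (Pi.single k 1, 0)) := by
    rw [hqfun]
    rw [show pd (fun y : Fin d → ℝ =>
          fderiv ℝ (fun z' : (Fin d → ℝ) × ℝ => p z'.1 z'.2) (y, t) (0, 1)
            + ∑ k, u y t k * fderiv ℝ (fun z' : (Fin d → ℝ) × ℝ => p z'.1 z'.2) (y, t)
                (Pi.single k 1, 0)) x i
        = fderiv ℝ (fun z : (Fin d → ℝ) × ℝ =>
            fderiv ℝ (fun z' : (Fin d → ℝ) × ℝ => p z'.1 z'.2) z (0, 1)
              + ∑ k, u z.1 z.2 k * fderiv ℝ (fun z' : (Fin d → ℝ) × ℝ => p z'.1 z'.2) z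
                  (Pi.single k 1, 0)) (x, t) (Pi.single i 1, 0) from pd_slice hG x t i]
    rw [fderiv_fun_add (hgqt.differentiable (by simp) (x, t)) (hqsum.differentiable (by simp) (x, t))]
    rw [ContinuousLinearMap.add_apply]
    rw [fderiv_sum_mul huj hgq (x, t) (Pi.single i 1, 0)]
    rw [fderiv_swap hp (x, t) (0, 1) (Pi.single i 1, 0)]
    congr 1
    exact Finset.sum_congr rfl fun k _ => by
      rw [fderiv_swap hp (x, t) (Pi.single k 1, 0) (Pi.single i 1, 0)]
  -- assemble
  rw [hderw, hpdq]
  simp only [hpdw, cux, cAx]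
  exact weber_algebra (fun k => u x t k) (fun j => v x t j) (fun j => Γ x t j)
    (fun k => w x t k)
    (fun j => fderiv ℝ (fun z : (Fin d → ℝ) × ℝ => A z.1 z.2 j) (x, t) (Pi.single i 1, 0))
    (fun j => fderiv ℝ (fun z : (Fin d → ℝ) × ℝ => v z.1 z.2 j) (x, t) (0, 1))
    (fun k => fderiv ℝ (fun z : (Fin d → ℝ) × ℝ => p z.1 z.2) (x, t) (Pi.single k 1, 0))
    (fun k => fderiv ℝ (fun z : (Fin d → ℝ) × ℝ => u z.1 z.2 k) (x, t) (Pi.single i 1, 0))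
    (fun j => fderiv ℝ (fun z : (Fin d → ℝ) × ℝ =>
        fderiv ℝ (fun z' : (Fin d → ℝ) × ℝ => A z'.1 z'.2 j) z (Pi.single i 1, 0))
        (x, t) (0, 1))
    (fun k => fderiv ℝ (fun z : (Fin d → ℝ) × ℝ =>
        fderiv ℝ (fun z' : (Fin d → ℝ) × ℝ => p z'.1 z'.2) z (Pi.single i 1, 0))
        (x, t) (Pi.single k 1, 0))
    (fderiv ℝ (fun z : (Fin d → ℝ) × ℝ =>
        fderiv ℝ (fun z' : (Fin d → ℝ) × ℝ => p z'.1 z'.2) z (Pi.single i 1, 0))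
        (x, t) (0, 1))
    (fun j k => fderiv ℝ (fun z : (Fin d → ℝ) × ℝ => v z.1 z.2 j) (x, t) (Pi.single k 1, 0))
    (fun j k => fderiv ℝ (fun z : (Fin d → ℝ) × ℝ => A z.1 z.2 j) (x, t) (Pi.single k 1, 0))
    (fun j k => fderiv ℝ (fun z : (Fin d → ℝ) × ℝ =>
        fderiv ℝ (fun z' : (Fin d → ℝ) × ℝ => A z'.1 z'.2 j) z (Pi.single i 1, 0))
        (x, t) (Pi.single k 1, 0))
    h1 h2 h3
end

section
/- Let u : ℝⁿ × ℝ → ℝⁿ be a smooth divergence-free vector field, X a smooth flow map of u whose spatial inverse A(·,t) is smooth jointly in x and t, and u₀ : ℝⁿ → ℝⁿ smooth. Let p : ℝⁿ × ℝ → ℝ be smooth and set w = (∇A)ᵀ (u₀∘A) − ∇p. Then w satisfies ∂ₜw + (u·∇)w + (∇u)ᵀ w + ∇q = 0 with q = ∂ₜp + (u·∇)p, and w(x,0) = u₀(x) − ∇p(x,0). -/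
section toolkit
variable {d : ℕ}

lemma cdiff_dAt {E F : Type*} [NormedAddCommGroup E] [NormedSpace ℝ E]
    [NormedAddCommGroup F] [NormedSpace ℝ F] {f : E → F}
    (hf : ContDiff ℝ (⊤ : ℕ∞) f) (z : E) : DifferentiableAt ℝ f z :=
  (hf.differentiable (by simp)).differentiableAt

lemma smooth_dd {f : (Fin d → ℝ) × ℝ → ℝ} (hf : ContDiff ℝ (⊤ : ℕ∞) f) (v : (Fin d → ℝ) × ℝ) :
    ContDiff ℝ (⊤ : ℕ∞) (fun z => fderiv ℝ f z v) :=
  (ContinuousLinearMap.apply ℝ ℝ v).contDiff.comp (hf.fderiv_right (by simp))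

lemma dd_add {g h : (Fin d → ℝ) × ℝ → ℝ} {z v : (Fin d → ℝ) × ℝ}
    (hg : DifferentiableAt ℝ g z) (hh : DifferentiableAt ℝ h z) :
    fderiv ℝ (fun y => g y + h y) z v = fderiv ℝ g z v + fderiv ℝ h z v := by
  rw [fderiv_fun_add hg hh]; rfl

lemma dd_sub {g h : (Fin d → ℝ) × ℝ → ℝ} {z v : (Fin d → ℝ) × ℝ}
    (hg : DifferentiableAt ℝ g z) (hh : DifferentiableAt ℝ h z) :
    fderiv ℝ (fun y => g y - h y) z v = fderiv ℝ g z v - fderiv ℝ h z v := by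
  rw [fderiv_fun_sub hg hh]; rfl

lemma dd_mul {g h : (Fin d → ℝ) × ℝ → ℝ} {z v : (Fin d → ℝ) × ℝ}
    (hg : DifferentiableAt ℝ g z) (hh : DifferentiableAt ℝ h z) :
    fderiv ℝ (fun y => g y * h y) z v
      = g z * fderiv ℝ h z v + h z * fderiv ℝ g z v := by
  rw [fderiv_fun_mul hg hh]; simp [smul_eq_mul]

lemma dd_sum {ι : Type*} (s : Finset ι) {F : ι → (Fin d → ℝ) × ℝ → ℝ}
    {z v : (Fin d → ℝ) × ℝ} (hF : ∀ i ∈ s, DifferentiableAt ℝ (F i) z) :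
    fderiv ℝ (fun y => ∑ i ∈ s, F i y) z v = ∑ i ∈ s, fderiv ℝ (F i) z v := by
  rw [fderiv_fun_sum hF]; simp

lemma dd_swap {f : (Fin d → ℝ) × ℝ → ℝ} (hf : ContDiff ℝ (⊤ : ℕ∞) f) (v w z : (Fin d → ℝ) × ℝ) :
    fderiv ℝ (fun y => fderiv ℝ f y v) z w = fderiv ℝ (fun y => fderiv ℝ f y w) z v := by
  have haux : ∀ (a : (Fin d → ℝ) × ℝ), fderiv ℝ (fun y => fderiv ℝ f y a) z
      = (ContinuousLinearMap.apply ℝ ℝ a).comp (fderiv ℝ (fderiv ℝ f) z) := by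
    intro a
    have : (fun y => fderiv ℝ f y a) = (ContinuousLinearMap.apply ℝ ℝ a) ∘ (fderiv ℝ f) := rfl
    rw [this, fderiv_comp _ (ContinuousLinearMap.differentiableAt _)
      ((hf.fderiv_right (m := (⊤ : ℕ∞)) (by simp)).differentiable (by simp)).differentiableAt,
      ContinuousLinearMap.fderiv]
  rw [haux v, haux w]
  exact second_derivative_symmetric (fun y => (hf.differentiable (by simp) y).hasFDerivAt)
    (((hf.fderiv_right (m := (⊤ : ℕ∞)) (by simp)).differentiable (by simp) z).hasFDerivAt) w v

lemma pd_eq {f : (Fin d → ℝ) × ℝ → ℝ} {x : Fin d → ℝ} {t : ℝ}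
    (hf : DifferentiableAt ℝ f (x, t)) (i : Fin d) :
    pd (fun y => f (y, t)) x i = fderiv ℝ f (x, t) (Pi.single i 1, 0) := by
  unfold pd
  have h1 : HasFDerivAt (fun y : Fin d → ℝ => ((y, t) : (Fin d → ℝ) × ℝ))
      (ContinuousLinearMap.inl ℝ (Fin d → ℝ) ℝ) x := hasFDerivAt_prodMk_left x t
  have h2 : HasFDerivAt (fun y => f (y, t))
      ((fderiv ℝ f (x, t)).comp (ContinuousLinearMap.inl ℝ (Fin d → ℝ) ℝ)) x :=
    hf.hasFDerivAt.comp x h1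
  rw [h2.fderiv]; rfl

lemma deriv_eq' {f : (Fin d → ℝ) × ℝ → ℝ} {x : Fin d → ℝ} {t : ℝ}
    (hf : DifferentiableAt ℝ f (x, t)) :
    deriv (fun s => f (x, s)) t = fderiv ℝ f (x, t) (0, 1) := by
  have h1 : HasDerivAt (fun s : ℝ => ((x, s) : (Fin d → ℝ) × ℝ)) (0, 1) t :=
    (hasDerivAt_const t x).prodMk (hasDerivAt_id t)
  exact (hf.hasFDerivAt.comp_hasDerivAt t h1).deriv

lemma vec_decomp (g : (Fin d → ℝ) × ℝ → ℝ) (z : (Fin d → ℝ) × ℝ) (v : Fin d → ℝ) :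
    fderiv ℝ g z (v, 1)
      = fderiv ℝ g z (0, 1) + ∑ j, v j * fderiv ℝ g z (Pi.single j 1, 0) := by
  have h1 : v = ∑ j, v j • (Pi.single j 1 : Fin d → ℝ) := by
    ext k
    simp [Pi.single_apply]
  have hv : ((v, 1) : (Fin d → ℝ) × ℝ)
      = (0, 1) + ∑ j, v j • (((Pi.single j 1 : Fin d → ℝ), (0:ℝ)) : (Fin d → ℝ) × ℝ) := by
    rw [Prod.ext_iff]
    constructor
    · simp only [Prod.fst_add, Prod.fst_sum, Prod.smul_mk]
      simpa using h1
    · simp [Prod.snd_sum]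
  rw [hv, map_add, map_sum]
  have he : ∀ j : Fin d, ((v j • (Pi.single j 1 : Fin d → ℝ) : Fin d → ℝ), (0:ℝ))
      = v j • (((Pi.single j 1 : Fin d → ℝ), (0:ℝ)) : (Fin d → ℝ) × ℝ) := fun j => by
    simp [Prod.smul_mk]
  simp only [he, map_smul, smul_eq_mul]

lemma alg_key (Bv Pv c : Fin d → ℝ) (D : Fin d → Fin d → ℝ) (Y : ℝ) :
    ((∑ j, Bv j * (-(∑ k, c k * D k j))) - Y)
      + (∑ k, c k * ((∑ j, Bv j * D k j) - Pv k))
      + (Y + ∑ k, c k * Pv k) = 0 := by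
  have h1 : ∑ k, c k * ((∑ j, Bv j * D k j) - Pv k)
      = (∑ k, ∑ j, c k * (Bv j * D k j)) - ∑ k, c k * Pv k := by
    simp [mul_sub, Finset.mul_sum, Finset.sum_sub_distrib]
  have h2 : ∑ j, Bv j * (-(∑ k, c k * D k j))
      = -∑ j, ∑ k, Bv j * (c k * D k j) := by
    simp [Finset.mul_sum]
  have h3 : ∑ k, ∑ j, c k * (Bv j * D k j) = ∑ j, ∑ k, Bv j * (c k * D k j) := by
    rw [Finset.sum_comm]
    exact Finset.sum_congr rfl fun _ _ => Finset.sum_congr rfl fun _ _ => by ring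
  rw [h1, h2, h3]; ring

lemma comm_lemma (u : (Fin d → ℝ) → ℝ → Fin d → ℝ)
    (hu : ContDiff ℝ (⊤ : ℕ∞) (fun z : (Fin d → ℝ) × ℝ => u z.1 z.2))
    (f : (Fin d → ℝ) × ℝ → ℝ) (hf : ContDiff ℝ (⊤ : ℕ∞) f) (i : Fin d) (z : (Fin d → ℝ) × ℝ) :
    fderiv ℝ (fun y => fderiv ℝ f y (u y.1 y.2, 1)) z (Pi.single i 1, 0)
      = fderiv ℝ (fun y => fderiv ℝ f y (Pi.single i 1, 0)) z (u z.1 z.2, 1)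
        + ∑ k, fderiv ℝ (fun y : (Fin d → ℝ) × ℝ => u y.1 y.2 k) z (Pi.single i 1, 0)
            * fderiv ℝ f z (Pi.single k 1, 0) := by
  have hU : ∀ k, ContDiff ℝ (⊤ : ℕ∞) (fun y : (Fin d → ℝ) × ℝ => u y.1 y.2 k) :=
    fun k => contDiff_pi.1 hu k
  have hfe : ∀ v, ContDiff ℝ (⊤ : ℕ∞) fun y => fderiv ℝ f y v := smooth_dd hf
  have h1 : (fun y : (Fin d → ℝ) × ℝ => fderiv ℝ f y (u y.1 y.2, 1))
      = fun y => fderiv ℝ f y ((0 : Fin d → ℝ), 1)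
          + ∑ k, u y.1 y.2 k * fderiv ℝ f y (Pi.single k 1, 0) :=
    funext fun y => vec_decomp f y _
  rw [h1]
  have hsum : ContDiff ℝ (⊤ : ℕ∞)
      (fun y : (Fin d → ℝ) × ℝ => ∑ k, u y.1 y.2 k * fderiv ℝ f y (Pi.single k 1, 0)) :=
    ContDiff.sum fun k _ => (hU k).mul (hfe _)
  rw [dd_add (cdiff_dAt (hfe _) z) (cdiff_dAt hsum z),
    dd_sum Finset.univ (fun k _ => cdiff_dAt ((hU k).mul (hfe _)) z),
    dd_swap hf _ _ z]
  have h2 : ∀ k : Fin d,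
      fderiv ℝ (fun y => u y.1 y.2 k * fderiv ℝ f y (Pi.single k 1, 0)) z (Pi.single i 1, 0)
        = u z.1 z.2 k * fderiv ℝ (fun y => fderiv ℝ f y (Pi.single i 1, 0)) z (Pi.single k 1, 0)
          + fderiv ℝ f z (Pi.single k 1, 0)
              * fderiv ℝ (fun y : (Fin d → ℝ) × ℝ => u y.1 y.2 k) z (Pi.single i 1, 0) := by
    intro k
    rw [dd_mul (cdiff_dAt (hU k) z) (cdiff_dAt (hfe _) z), dd_swap hf _ _ z]
  simp only [h2]
  rw [vec_decomp (fun y => fderiv ℝ f y (Pi.single i 1, 0)) z (u z.1 z.2),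
    Finset.sum_add_distrib, ← add_assoc]
  congr 1
  exact Finset.sum_congr rfl fun k _ => mul_comm _ _

end toolkit

noncomputable def Wfun {d : ℕ} (A : (Fin d → ℝ) → ℝ → Fin d → ℝ)
    (u₀ : (Fin d → ℝ) → Fin d → ℝ) (p : (Fin d → ℝ) → ℝ → ℝ)
    (i : Fin d) (z : (Fin d → ℝ) × ℝ) : ℝ :=
  (∑ j, u₀ (A z.1 z.2) j * fderiv ℝ (fun y : (Fin d → ℝ) × ℝ => A y.1 y.2 j) z (Pi.single i 1, 0))
    - fderiv ℝ (fun y : (Fin d → ℝ) × ℝ => p y.1 y.2) z (Pi.single i 1, 0)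

noncomputable def Qfun {d : ℕ} (u : (Fin d → ℝ) → ℝ → Fin d → ℝ)
    (p : (Fin d → ℝ) → ℝ → ℝ) (z : (Fin d → ℝ) × ℝ) : ℝ :=
  fderiv ℝ (fun y : (Fin d → ℝ) × ℝ => p y.1 y.2) z ((0 : Fin d → ℝ), 1)
    + ∑ j, u z.1 z.2 j * fderiv ℝ (fun y : (Fin d → ℝ) × ℝ => p y.1 y.2) z (Pi.single j 1, 0)

/-- If `A` is the inverse of the flow map `X` of a divergence-free `u` and
`w = (∇A)ᵀ (u₀∘A) − ∇p`, then `∂ₜw + (u·∇)w + (∇u)ᵀ w + ∇q = 0` with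
`q = ∂ₜp + (u·∇)p`, and `w(x,0) = u₀(x) − ∇p(x,0)`. -/
theorem weber_formula_evolution {d : ℕ}
    (u X A : (Fin d → ℝ) → ℝ → Fin d → ℝ)
    (u₀ : (Fin d → ℝ) → Fin d → ℝ)
    (p : (Fin d → ℝ) → ℝ → ℝ)
    (w : (Fin d → ℝ) → ℝ → Fin d → ℝ)
    (q : (Fin d → ℝ) → ℝ → ℝ)
    (hu : ContDiff ℝ (⊤ : ℕ∞) (fun z : (Fin d → ℝ) × ℝ => u z.1 z.2))
    (hdiv : ∀ x t, ∑ i, pd (fun y => u y t i) x i = 0)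
    (hX : ContDiff ℝ (⊤ : ℕ∞) (fun z : (Fin d → ℝ) × ℝ => X z.1 z.2))
    (hA : ContDiff ℝ (⊤ : ℕ∞) (fun z : (Fin d → ℝ) × ℝ => A z.1 z.2))
    (hflow : ∀ a t, deriv (fun s => X a s) t = u (X a t) t)
    (hinit : ∀ a, X a 0 = a)
    (hAX : ∀ a t, A (X a t) t = a)
    (hXA : ∀ x t, X (A x t) t = x)
    (hu₀ : ContDiff ℝ (⊤ : ℕ∞) u₀)
    (hp : ContDiff ℝ (⊤ : ℕ∞) (fun z : (Fin d → ℝ) × ℝ => p z.1 z.2))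
    (hw : ∀ x t i, w x t i
      = (∑ j, u₀ (A x t) j * pd (fun y => A y t j) x i) - pd (fun y => p y t) x i)
    (hq : ∀ x t, q x t
      = deriv (fun s => p x s) t + ∑ j, u x t j * pd (fun y => p y t) x j) :
    (∀ (x : Fin d → ℝ) (t : ℝ) (i : Fin d),
        deriv (fun s => w x s i) t
            + ∑ j, u x t j * pd (fun y => w y t i) x j
            + ∑ j, pd (fun y => u y t j) x i * w x t j
            + pd (fun y => q y t) x i = 0)
      ∧ (∀ (x : Fin d → ℝ) (i : Fin d),
          w x 0 i = u₀ x i - pd (fun y => p y 0) x i) := by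
  classical
  have hU : ∀ j, ContDiff ℝ (⊤ : ℕ∞) (fun z : (Fin d → ℝ) × ℝ => u z.1 z.2 j) :=
    fun j => contDiff_pi.1 hu j
  have hAj : ∀ j, ContDiff ℝ (⊤ : ℕ∞) (fun z : (Fin d → ℝ) × ℝ => A z.1 z.2 j) :=
    fun j => contDiff_pi.1 hA j
  have hB : ∀ j, ContDiff ℝ (⊤ : ℕ∞) (fun z : (Fin d → ℝ) × ℝ => u₀ (A z.1 z.2) j) :=
    fun j => (contDiff_pi.1 hu₀ j).comp hA
  -- Dt A = 0
  have hDtA : ∀ (j : Fin d) (x : Fin d → ℝ) (t : ℝ),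
      fderiv ℝ (fun z : (Fin d → ℝ) × ℝ => A z.1 z.2 j) (x, t) (u x t, 1) = 0 := by
    intro j x t
    set a := A x t with ha
    have hxa : X a t = x := hXA x t
    have hXd : ∀ s : ℝ, HasDerivAt (fun s => X a s) (u (X a s) s) s := by
      intro s
      have hsd : Differentiable ℝ (fun s : ℝ => ((a, s) : (Fin d → ℝ) × ℝ)) :=
        (differentiable_const a).prodMk differentiable_id
      have h1 : DifferentiableAt ℝ (fun s => X a s) s :=
        ((hX.differentiable (by simp)).comp hsd).differentiableAt
      have := h1.hasDerivAt
      rwa [hflow a s] at this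
    have hZ : HasDerivAt (fun s => ((X a s, s) : (Fin d → ℝ) × ℝ)) (u (X a t) t, 1) t :=
      (hXd t).prodMk (hasDerivAt_id t)
    have hc0 := HasFDerivAt.comp_hasDerivAt (f := fun s : ℝ => ((X a s, s) : (Fin d → ℝ) × ℝ)) t
      (cdiff_dAt (hAj j) ((X a t, t) : (Fin d → ℝ) × ℝ)).hasFDerivAt hZ
    have hc : HasDerivAt (fun s => A (X a s) s j)
        (fderiv ℝ (fun z : (Fin d → ℝ) × ℝ => A z.1 z.2 j) (X a t, t) (u (X a t) t, 1)) t := hc0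
    have hconst : (fun s => A (X a s) s j) = fun _ => a j := funext fun s => by rw [hAX]
    rw [hconst] at hc
    have h0 := hc.unique (hasDerivAt_const t (a j))
    rwa [hxa] at h0
  -- Dt (u₀ ∘ A) = 0
  have hDtB : ∀ (j : Fin d) (x : Fin d → ℝ) (t : ℝ),
      fderiv ℝ (fun z : (Fin d → ℝ) × ℝ => u₀ (A z.1 z.2) j) (x, t) (u x t, 1) = 0 := by
    intro j x t
    have hAm : DifferentiableAt ℝ (fun z : (Fin d → ℝ) × ℝ => A z.1 z.2) (x, t) :=
      (hA.differentiable (by simp)).differentiableAt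
    have hu0d : DifferentiableAt ℝ (fun y => u₀ y j) (A x t) :=
      cdiff_dAt (contDiff_pi.1 hu₀ j) _
    have h20 := hu0d.hasFDerivAt.comp ((x, t) : (Fin d → ℝ) × ℝ) hAm.hasFDerivAt
    have h2 : HasFDerivAt (fun z : (Fin d → ℝ) × ℝ => u₀ (A z.1 z.2) j)
        ((fderiv ℝ (fun y => u₀ y j) (A x t)).comp
          (fderiv ℝ (fun z : (Fin d → ℝ) × ℝ => A z.1 z.2) (x, t))) (x, t) := h20
    rw [h2.fderiv]
    have hzero : fderiv ℝ (fun z : (Fin d → ℝ) × ℝ => A z.1 z.2) (x, t) (u x t, 1) = 0 := by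
      have hpi : fderiv ℝ (fun z : (Fin d → ℝ) × ℝ => A z.1 z.2) (x, t)
          = ContinuousLinearMap.pi
              (fun k => fderiv ℝ (fun z : (Fin d → ℝ) × ℝ => A z.1 z.2 k) (x, t)) :=
        fderiv_pi (fun k => cdiff_dAt (hAj k) _)
      rw [hpi]
      funext k
      simp [ContinuousLinearMap.pi_apply, hDtA]
    simp [ContinuousLinearMap.comp_apply, hzero]
  -- identification of w and q with smooth representatives
  have hwW : ∀ x t i, w x t i = Wfun A u₀ p i (x, t) := by
    intro x t i
    rw [hw]
    unfold Wfun
    congr 1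
    · exact Finset.sum_congr rfl fun j _ => by
        rw [pd_eq (cdiff_dAt (hAj j) ((x, t) : (Fin d → ℝ) × ℝ)) i]
    · exact pd_eq (cdiff_dAt hp _) i
  have hqQ : ∀ x t, q x t = Qfun u p (x, t) := by
    intro x t
    rw [hq]
    unfold Qfun
    congr 1
    · exact deriv_eq' (cdiff_dAt hp _)
    · exact Finset.sum_congr rfl fun j _ => by rw [pd_eq (cdiff_dAt hp _) j]
  have hWs : ∀ i, ContDiff ℝ (⊤ : ℕ∞) (Wfun A u₀ p i) := by
    intro i
    unfold Wfun
    exact (ContDiff.sum fun j _ => (hB j).mul (smooth_dd (hAj j) _)).sub (smooth_dd hp _)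
  have hQs : ContDiff ℝ (⊤ : ℕ∞) (Qfun u p) := by
    unfold Qfun
    exact (smooth_dd hp _).add (ContDiff.sum fun j _ => (hU j).mul (smooth_dd hp _))
  have hQD : Qfun u p = fun y : (Fin d → ℝ) × ℝ =>
      fderiv ℝ (fun z : (Fin d → ℝ) × ℝ => p z.1 z.2) y (u y.1 y.2, 1) :=
    funext fun y => (vec_decomp _ y _).symm
  constructor
  · intro x t i
    have e1 : deriv (fun s => w x s i) t
        = fderiv ℝ (Wfun A u₀ p i) (x, t) ((0 : Fin d → ℝ), 1) := by
      have h : (fun s => w x s i) = fun s => Wfun A u₀ p i (x, s) :=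
        funext fun s => hwW x s i
      rw [h]
      exact deriv_eq' (cdiff_dAt (hWs i) _)
    have e2 : ∀ j, pd (fun y => w y t i) x j
        = fderiv ℝ (Wfun A u₀ p i) (x, t) (Pi.single j 1, 0) := by
      intro j
      have h : (fun y => w y t i) = fun y => Wfun A u₀ p i (y, t) :=
        funext fun y => hwW y t i
      rw [h]
      exact pd_eq (cdiff_dAt (hWs i) _) j
    have e3 : pd (fun y => q y t) x i
        = fderiv ℝ (Qfun u p) (x, t) (Pi.single i 1, 0) := by
      have h : (fun y => q y t) = fun y => Qfun u p (y, t) := funext fun y => hqQ y t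
      rw [h]
      exact pd_eq (cdiff_dAt hQs _) i
    have e4 : ∀ j, pd (fun y => u y t j) x i
        = fderiv ℝ (fun z : (Fin d → ℝ) × ℝ => u z.1 z.2 j) (x, t) (Pi.single i 1, 0) :=
      fun j => pd_eq (cdiff_dAt (hU j) _) i
    rw [e1, e3]
    simp only [e2, e4]
    simp only [hwW]
    rw [← vec_decomp (Wfun A u₀ p i) (x, t) (u x t)]
    -- compute the material derivative of W i
    have hAcomm : ∀ j : Fin d,
        fderiv ℝ (fun y => fderiv ℝ (fun z : (Fin d → ℝ) × ℝ => A z.1 z.2 j) y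
            (Pi.single i 1, 0)) (x, t) (u x t, 1)
          = -(∑ k, fderiv ℝ (fun z : (Fin d → ℝ) × ℝ => u z.1 z.2 k) (x, t) (Pi.single i 1, 0)
              * fderiv ℝ (fun z : (Fin d → ℝ) × ℝ => A z.1 z.2 j) (x, t) (Pi.single k 1, 0)) := by
      intro j
      have hc := comm_lemma u hu _ (hAj j) i (x, t)
      have hz : (fun y : (Fin d → ℝ) × ℝ =>
          fderiv ℝ (fun z : (Fin d → ℝ) × ℝ => A z.1 z.2 j) y (u y.1 y.2, 1))
          = fun _ => (0 : ℝ) := funext fun y => hDtA j y.1 y.2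
      rw [hz, fderiv_fun_const] at hc
      simp only [Pi.zero_apply, ContinuousLinearMap.zero_apply] at hc
      linarith [hc]
    have hDtW : fderiv ℝ (Wfun A u₀ p i) (x, t) (u x t, 1)
        = ((∑ j, u₀ (A x t) j *
            (-(∑ k, fderiv ℝ (fun z : (Fin d → ℝ) × ℝ => u z.1 z.2 k) (x, t) (Pi.single i 1, 0)
              * fderiv ℝ (fun z : (Fin d → ℝ) × ℝ => A z.1 z.2 j) (x, t) (Pi.single k 1, 0))))
          - fderiv ℝ (fun y : (Fin d → ℝ) × ℝ =>
              fderiv ℝ (fun z : (Fin d → ℝ) × ℝ => p z.1 z.2) y (Pi.single i 1, 0)) (x, t)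
              (u x t, 1)) := by
      unfold Wfun
      rw [dd_sub (cdiff_dAt (ContDiff.sum fun j _ => (hB j).mul (smooth_dd (hAj j) _)) _)
        (cdiff_dAt (smooth_dd hp _) _),
        dd_sum Finset.univ (fun j _ => cdiff_dAt ((hB j).mul (smooth_dd (hAj j) _)) _)]
      congr 1
      refine Finset.sum_congr rfl fun j _ => ?_
      rw [dd_mul (cdiff_dAt (hB j) _) (cdiff_dAt (smooth_dd (hAj j) _) _), hDtB, hAcomm]
      ring
    have hQe : fderiv ℝ (Qfun u p) (x, t) (Pi.single i 1, 0)
        = fderiv ℝ (fun y : (Fin d → ℝ) × ℝ =>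
              fderiv ℝ (fun z : (Fin d → ℝ) × ℝ => p z.1 z.2) y (Pi.single i 1, 0)) (x, t)
              (u x t, 1)
          + ∑ k, fderiv ℝ (fun z : (Fin d → ℝ) × ℝ => u z.1 z.2 k) (x, t) (Pi.single i 1, 0)
              * fderiv ℝ (fun z : (Fin d → ℝ) × ℝ => p z.1 z.2) (x, t) (Pi.single k 1, 0) := by
      rw [hQD]
      exact comm_lemma u hu _ hp i (x, t)
    rw [hDtW, hQe]
    unfold Wfun
    exact alg_key (fun j => u₀ (A x t) j)
      (fun k => fderiv ℝ (fun z : (Fin d → ℝ) × ℝ => p z.1 z.2) (x, t) (Pi.single k 1, 0))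
      (fun k => fderiv ℝ (fun z : (Fin d → ℝ) × ℝ => u z.1 z.2 k) (x, t) (Pi.single i 1, 0))
      (fun k j => fderiv ℝ (fun z : (Fin d → ℝ) × ℝ => A z.1 z.2 j) (x, t) (Pi.single k 1, 0))
      _
  · intro x i
    rw [hw x 0 i]
    have hA0 : ∀ y, A y 0 = y := by
      intro y
      have h := hAX y 0
      rwa [hinit y] at h
    have h1 : ∀ j, pd (fun y => A y 0 j) x i = (Pi.single i 1 : Fin d → ℝ) j := by
      intro j
      have h : (fun y => A y 0 j) = fun y : Fin d → ℝ => y j := funext fun y => by rw [hA0]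
      rw [h]
      show fderiv ℝ (fun y : Fin d → ℝ => y j) x (Pi.single i 1) = _
      rw [show (fun y : Fin d → ℝ => y j)
          = ⇑(ContinuousLinearMap.proj (R := ℝ) (φ := fun _ : Fin d => ℝ) j) from rfl,
        ContinuousLinearMap.fderiv]
      rfl
    rw [hA0 x]
    simp only [h1]
    congr 1
    simp [Pi.single_apply]
end

section
/- (Conservation of circulation under the Weber formula.) Let X : ℝⁿ → ℝⁿ be a smooth diffeomorphism with smooth inverse A, let u₀ : ℝⁿ → ℝⁿ and q : ℝⁿ → ℝ be smooth, and define ũ = (∇A)ᵀ (u₀∘A) + ∇q. Then for every closed C¹ curve γ : [0,1] → ℝⁿ (γ(0) = γ(1)), the circulation of ũ around the image curve X∘γ equals the circulation of u₀ around γ: ∫₀¹ ⟨ũ(X(γ(s))), ∇X(γ(s)) γ′(s)⟩ ds = ∫₀¹ ⟨u₀(γ(s)), γ′(s)⟩ ds. -/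
lemma sum_pd_mul {d : ℕ} (f : (Fin d → ℝ) → ℝ) (x v : Fin d → ℝ) :
    ∑ j, pd f x j * v j = fderiv ℝ f x v := by
  have hv : v = ∑ j, v j • (Pi.single j 1 : Fin d → ℝ) := by
    funext i
    simp [Pi.single_apply, Finset.sum_apply, eq_comm]
  conv_rhs => rw [hv]
  rw [map_sum]
  simp [pd, mul_comm]

lemma comp_fd {d : ℕ} (f : (Fin d → ℝ) → Fin d → ℝ) (hf : Differentiable ℝ f)
    (x v : Fin d → ℝ) (i : Fin d) :
    fderiv ℝ (fun y => f y i) x v = fderiv ℝ f x v i := by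
  have h1 : (fun y => f y i)
      = (ContinuousLinearMap.proj (R := ℝ) (φ := fun _ : Fin d => ℝ) i) ∘ f := rfl
  rw [h1, fderiv_comp x ((ContinuousLinearMap.proj i).differentiableAt) (hf x),
      ContinuousLinearMap.fderiv]
  rfl


/-- Conservation of circulation under the Weber formula: if `X` is a smooth
diffeomorphism with inverse `A` and `ũ = (∇A)ᵀ (u₀∘A) + ∇q`, then the
circulation of `ũ` around `X∘γ` equals the circulation of `u₀` around the
closed curve `γ`. -/
theorem weber_circulation_conserved {d : ℕ}
    (X A : (Fin d → ℝ) → Fin d → ℝ)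
    (u₀ : (Fin d → ℝ) → Fin d → ℝ)
    (q : (Fin d → ℝ) → ℝ)
    (ut : (Fin d → ℝ) → Fin d → ℝ)
    (hX : ContDiff ℝ (⊤ : ℕ∞) X) (hA : ContDiff ℝ (⊤ : ℕ∞) A)
    (hAX : ∀ a, A (X a) = a) (hXA : ∀ x, X (A x) = x)
    (hu₀ : ContDiff ℝ (⊤ : ℕ∞) u₀) (hq : ContDiff ℝ (⊤ : ℕ∞) q)
    (hut : ∀ x i, ut x i
      = (∑ j, u₀ (A x) j * pd (fun y => A y j) x i) + pd q x i)
    (γ : ℝ → Fin d → ℝ)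
    (hγ : ContDiff ℝ 1 γ) (hclosed : γ 0 = γ 1) :
    (∫ s in (0:ℝ)..1,
        ∑ i, ut (X (γ s)) i * ∑ j, pd (fun a => X a i) (γ s) j * deriv γ s j)
      = ∫ s in (0:ℝ)..1, ∑ i, u₀ (γ s) i * deriv γ s i := by
  classical
  have hXd : Differentiable ℝ X := hX.differentiable (by simp)
  have hAd : Differentiable ℝ A := hA.differentiable (by simp)
  have hqd : Differentiable ℝ q := hq.differentiable (by simp)
  have hγd : Differentiable ℝ γ := hγ.differentiable one_ne_zero
  have key : ∀ s : ℝ,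
      (∑ i, ut (X (γ s)) i * ∑ j, pd (fun a => X a i) (γ s) j * deriv γ s j)
      = (∑ i, u₀ (γ s) i * deriv γ s i) + deriv (fun t => q (X (γ t))) s := by
    intro s
    set a := γ s with ha
    set v := deriv γ s with hvdef
    set w := fderiv ℝ X a v with hw
    -- inner sums equal components of w
    have hxi : ∀ i, ∑ j, pd (fun y => X y i) a j * v j = w i := by
      intro i
      rw [sum_pd_mul, comp_fd X hXd a v i]
    have hAproj : ∀ k : Fin d, Differentiable ℝ (fun y => A y k) := by
      intro k
      exact (ContinuousLinearMap.proj (R := ℝ) (φ := fun _ : Fin d => ℝ)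
        k).differentiable.comp hAd
    have hAk : ∀ k, ∑ i, pd (fun y => A y k) (X a) i * w i = v k := by
      intro k
      rw [sum_pd_mul]
      have hcomp := fderiv_comp (𝕜 := ℝ) a ((hAproj k) (X a)) (hXd a)
      have hc : ((fun y => A y k) ∘ X) = fun y => y k := by
        funext y; simp [hAX]
      rw [hc] at hcomp
      have hproj : fderiv ℝ (fun y : Fin d → ℝ => y k) a
          = ContinuousLinearMap.proj (R := ℝ) (φ := fun _ : Fin d => ℝ) k := by
        exact (ContinuousLinearMap.proj (R := ℝ) (φ := fun _ : Fin d => ℝ) k).fderiv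
      have := congrArg (fun (L : (Fin d → ℝ) →L[ℝ] ℝ) => L v) hcomp.symm
      simpa [hproj, hw] using this
    have hqs : ∑ i, pd q (X a) i * w i = deriv (fun t => q (X (γ t))) s := by
      rw [sum_pd_mul]
      have h1 : HasDerivAt γ v s := (hγd s).hasDerivAt
      have h2 : HasDerivAt (fun t => X (γ t)) w s :=
        (hXd a).hasFDerivAt.comp_hasDerivAt s h1
      have h3 : HasDerivAt (fun t => q (X (γ t))) (fderiv ℝ q (X a) w) s :=
        (hqd (X a)).hasFDerivAt.comp_hasDerivAt s h2
      exact (h3.deriv).symm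
    calc (∑ i, ut (X a) i * ∑ j, pd (fun y => X y i) a j * v j)
        = ∑ i, ((∑ k, u₀ a k * pd (fun y => A y k) (X a) i) + pd q (X a) i) * w i := by
          refine Finset.sum_congr rfl fun i _ => ?_
          rw [hxi i, hut (X a) i, hAX a]
      _ = (∑ k, u₀ a k * ∑ i, pd (fun y => A y k) (X a) i * w i)
            + ∑ i, pd q (X a) i * w i := by
          simp only [add_mul, Finset.sum_add_distrib]
          congr 1
          simp only [Finset.sum_mul, Finset.mul_sum, mul_assoc]
          exact Finset.sum_comm
      _ = (∑ i, u₀ a i * v i) + deriv (fun t => q (X (γ t))) s := by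
          rw [hqs]
          congr 1
          exact Finset.sum_congr rfl fun k _ => by rw [hAk k]
  have hderivcont : Continuous (deriv γ) := hγ.continuous_deriv le_rfl
  have hcont1 : Continuous (fun s => ∑ i, u₀ (γ s) i * deriv γ s i) := by
    apply continuous_finset_sum
    intro i _
    exact ((continuous_apply i).comp (hu₀.continuous.comp hγ.continuous)).mul
      ((continuous_apply i).comp hderivcont)
  have hqXγ : ContDiff ℝ 1 (fun t => q (X (γ t))) :=
    ((hq.comp hX).of_le (by simp)).comp hγ
  have hcont2 : Continuous (deriv (fun t => q (X (γ t)))) :=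
    hqXγ.continuous_deriv le_rfl
  have hint1 : IntervalIntegrable (fun s => ∑ i, u₀ (γ s) i * deriv γ s i)
      MeasureTheory.volume 0 1 := hcont1.intervalIntegrable _ _
  have hint2 : IntervalIntegrable (deriv (fun t => q (X (γ t))))
      MeasureTheory.volume 0 1 := hcont2.intervalIntegrable _ _
  calc (∫ s in (0:ℝ)..1,
        ∑ i, ut (X (γ s)) i * ∑ j, pd (fun a => X a i) (γ s) j * deriv γ s j)
      = ∫ s in (0:ℝ)..1, ((∑ i, u₀ (γ s) i * deriv γ s i)
          + deriv (fun t => q (X (γ t))) s) := by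
        exact intervalIntegral.integral_congr fun s _ => key s
    _ = (∫ s in (0:ℝ)..1, ∑ i, u₀ (γ s) i * deriv γ s i)
          + ∫ s in (0:ℝ)..1, deriv (fun t => q (X (γ t))) s :=
        intervalIntegral.integral_add hint1 hint2
    _ = ∫ s in (0:ℝ)..1, ∑ i, u₀ (γ s) i * deriv γ s i := by
        rw [intervalIntegral.integral_deriv_eq_sub
          (fun x _ => (hqXγ.differentiable one_ne_zero) x) hint2]
        rw [hclosed]
        ring
end

section
/- (Cauchy vorticity formula direction.) Let u : ℝ³ × ℝ → ℝ³ be a smooth time-dependent vector field, X a smooth flow map of u whose spatial inverse A(·,t) is smooth jointly in x and t, and ω₀ : ℝ³ → ℝ³ smooth. Define ω(x,t) = ∇X(A(x,t),t) · ω₀(A(x,t)). Then ω satisfies the vorticity stretching equation ∂ₜω + (u·∇)ω = (ω·∇)u, with ω(x,0) = ω₀(x). -/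
section aux
variable {E G : Type*} [NormedAddCommGroup E] [NormedSpace ℝ E]
  [NormedAddCommGroup G] [NormedSpace ℝ G]

lemma hasFDerivAt_sliceT {f : E × ℝ → G} {x : E} {t : ℝ}
    (hf : DifferentiableAt ℝ f (x, t)) :
    HasFDerivAt (fun y => f (y, t)) ((fderiv ℝ f (x, t)).comp (ContinuousLinearMap.inl ℝ E ℝ)) x :=
  hf.hasFDerivAt.comp x (hasFDerivAt_prodMk_left x t)

lemma hasDerivAt_sliceT {f : E × ℝ → G} {x : E} {t : ℝ}
    (hf : DifferentiableAt ℝ f (x, t)) :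
    HasDerivAt (fun s => f (x, s)) (fderiv ℝ f (x, t) (0, 1)) t := by
  have h := hf.hasFDerivAt.comp t (hasFDerivAt_prodMk_right x t)
  simpa [Function.comp_def] using h.hasDerivAt

end aux

lemma pd_sliceT {d : ℕ} {f : (Fin d → ℝ) × ℝ → ℝ} {x : Fin d → ℝ} {t : ℝ}
    (hf : DifferentiableAt ℝ f (x, t)) (j : Fin d) :
    pd (fun y => f (y, t)) x j = fderiv ℝ f (x, t) (Pi.single j 1, 0) := by
  rw [pd, (hasFDerivAt_sliceT hf).fderiv]
  simp

lemma single_sum {d : ℕ} (v : Fin d → ℝ) :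
    ((v, (0:ℝ)) : (Fin d → ℝ) × ℝ)
      = ∑ j, v j • (((Pi.single j (1:ℝ) : Fin d → ℝ), (0:ℝ)) : (Fin d → ℝ) × ℝ) := by
  ext k
  · rw [Prod.fst_sum]
    simp only [Prod.smul_mk, Prod.fst]
    rw [Finset.sum_apply]
    simp [Pi.single_apply]
  · rw [Prod.snd_sum]
    simp

lemma fderiv_apply_vec {d : ℕ} {f : (Fin d → ℝ) × ℝ → ℝ} {x v : Fin d → ℝ} {t : ℝ}
    (hf : DifferentiableAt ℝ f (x, t)) :
    fderiv ℝ f (x, t) (v, 0) = ∑ j, v j * pd (fun y => f (y, t)) x j := by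
  rw [single_sum v, map_sum]
  exact Finset.sum_congr rfl fun j _ => by rw [map_smul, pd_sliceT hf]; rfl

/-- Cauchy vorticity formula direction: if `A` is the inverse of the flow map
`X` of `u` and `ω(x,t) = ∇X(A(x,t),t)·ω₀(A(x,t))`, then `ω` satisfies
`∂ₜω + (u·∇)ω = (ω·∇)u` with `ω(x,0) = ω₀(x)`. -/
theorem cauchy_vorticity_formula
    (u X A : (Fin 3 → ℝ) → ℝ → Fin 3 → ℝ)
    (ω₀ : (Fin 3 → ℝ) → Fin 3 → ℝ)
    (ω : (Fin 3 → ℝ) → ℝ → Fin 3 → ℝ)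
    (hu : ContDiff ℝ (⊤ : ℕ∞) (fun z : (Fin 3 → ℝ) × ℝ => u z.1 z.2))
    (hX : ContDiff ℝ (⊤ : ℕ∞) (fun z : (Fin 3 → ℝ) × ℝ => X z.1 z.2))
    (hA : ContDiff ℝ (⊤ : ℕ∞) (fun z : (Fin 3 → ℝ) × ℝ => A z.1 z.2))
    (hω₀ : ContDiff ℝ (⊤ : ℕ∞) ω₀)
    (hflow : ∀ a t, deriv (fun s => X a s) t = u (X a t) t)
    (hinit : ∀ a, X a 0 = a)
    (hAX : ∀ a t, A (X a t) t = a)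
    (hXA : ∀ x t, X (A x t) t = x)
    (hω : ∀ x t i, ω x t i
      = ∑ j, pd (fun b => X b t i) (A x t) j * ω₀ (A x t) j) :
    (∀ (x : Fin 3 → ℝ) (t : ℝ) (i : Fin 3),
        deriv (fun s => ω x s i) t
            + ∑ j, u x t j * pd (fun y => ω y t i) x j
          = ∑ j, ω x t j * pd (fun y => u y t i) x j)
      ∧ (∀ x, ω x 0 = ω₀ x) := by
  classical
  have hZd : Differentiable ℝ (fun z : (Fin 3 → ℝ) × ℝ => X z.1 z.2) := hX.differentiable (by simp)
  have hZi : ∀ i, ContDiff ℝ (⊤ : ℕ∞) (fun z : (Fin 3 → ℝ) × ℝ => X z.1 z.2 i) :=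
    fun i => contDiff_pi.1 hX i
  have hUi : ∀ i, ContDiff ℝ (⊤ : ℕ∞) (fun z : (Fin 3 → ℝ) × ℝ => u z.1 z.2 i) :=
    fun i => contDiff_pi.1 hu i
  have hDZi : ∀ i, ContDiff ℝ (⊤ : ℕ∞) (fderiv ℝ (fun z : (Fin 3 → ℝ) × ℝ => X z.1 z.2 i)) :=
    fun i => (hZi i).fderiv_right (by simp)
  -- the flow curve derivative
  have hcurve : ∀ a t, HasDerivAt (fun s => X a s) (u (X a t) t) t := by
    intro a t
    have hd : DifferentiableAt ℝ (fun s => X a s) t :=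
      (hX.comp ((contDiff_const (c := a)).prodMk contDiff_id)).differentiable (by simp) t
    have h := hd.hasDerivAt
    rwa [hflow a t] at h
  -- pd of X as a joint fderiv
  have hpdX : ∀ (a : Fin 3 → ℝ) (t : ℝ) (i j : Fin 3), pd (fun b => X b t i) a j
      = fderiv ℝ (fun z : (Fin 3 → ℝ) × ℝ => X z.1 z.2 i) (a, t) (Pi.single j 1, 0) :=
    fun a t i j => pd_sliceT ((hZi i).differentiable (by simp) (a, t)) j
  -- components of vector fderiv
  have hveccomp : ∀ (w : (Fin 3 → ℝ) × ℝ) (v : (Fin 3 → ℝ) × ℝ) (k : Fin 3),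
      fderiv ℝ (fun z : (Fin 3 → ℝ) × ℝ => X z.1 z.2) w v k
        = fderiv ℝ (fun z : (Fin 3 → ℝ) × ℝ => X z.1 z.2 k) w v := by
    intro w v k
    have h := hasFDerivAt_pi'.1 (hZd w).hasFDerivAt k
    rw [h.fderiv]
    rfl
  -- smoothness of ω components
  have hωsm : ∀ i, ContDiff ℝ (⊤ : ℕ∞) (fun z : (Fin 3 → ℝ) × ℝ => ω z.1 z.2 i) := by
    intro i
    have heq : (fun z : (Fin 3 → ℝ) × ℝ => ω z.1 z.2 i)
        = fun z : (Fin 3 → ℝ) × ℝ => ∑ j,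
            fderiv ℝ (fun z : (Fin 3 → ℝ) × ℝ => X z.1 z.2 i) (A z.1 z.2, z.2)
              (Pi.single j 1, 0) * ω₀ (A z.1 z.2) j := by
      funext z
      rw [hω]
      exact Finset.sum_congr rfl fun j _ => by rw [hpdX]
    rw [heq]
    have hAz : ContDiff ℝ (⊤ : ℕ∞) (fun z : (Fin 3 → ℝ) × ℝ => ((A z.1 z.2, z.2) : (Fin 3 → ℝ) × ℝ)) :=
      hA.prodMk contDiff_snd
    apply ContDiff.sum
    intro j _
    exact (((hDZi i).comp hAz).clm_apply contDiff_const).mul (contDiff_pi.1 (hω₀.comp hA) j)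
  constructor
  · intro x t i
    have hax : X (A x t) t = x := hXA x t
    -- Claim 2 : derivative along the trajectory, chain-rule form
    have hc2 : HasDerivAt (fun s => ω (X (A x t) s) s i)
        (deriv (fun s => ω x s i) t + ∑ j, u x t j * pd (fun y => ω y t i) x j) t := by
      have hcv : HasDerivAt (fun s => ((X (A x t) s, s) : (Fin 3 → ℝ) × ℝ)) ((u x t, 1)) t := by
        have h1 := hcurve (A x t) t
        rw [hax] at h1
        exact h1.prodMk (hasDerivAt_id t)
      have hWd' : HasFDerivAt (fun z : (Fin 3 → ℝ) × ℝ => ω z.1 z.2 i)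
          (fderiv ℝ (fun z : (Fin 3 → ℝ) × ℝ => ω z.1 z.2 i) (X (A x t) t, t)) (X (A x t) t, t) :=
        ((hωsm i).differentiable (by simp) _).hasFDerivAt
      have h2'' := hWd'.comp_hasDerivAt_of_eq t hcv rfl
      have h2 : HasDerivAt (fun s => ω (X (A x t) s) s i)
          (fderiv ℝ (fun z : (Fin 3 → ℝ) × ℝ => ω z.1 z.2 i) (X (A x t) t, t) (u x t, 1)) t := h2''
      rw [hax] at h2
      have hWd : DifferentiableAt ℝ (fun z : (Fin 3 → ℝ) × ℝ => ω z.1 z.2 i) (x, t) :=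
        (hωsm i).differentiable (by simp) (x, t)
      have hval : fderiv ℝ (fun z : (Fin 3 → ℝ) × ℝ => ω z.1 z.2 i) (x, t) (u x t, 1)
          = deriv (fun s => ω x s i) t + ∑ j, u x t j * pd (fun y => ω y t i) x j := by
        have hsplit : ((u x t, (1:ℝ)) : (Fin 3 → ℝ) × ℝ) = ((0:Fin 3 → ℝ), (1:ℝ)) + (u x t, 0) := by
          ext k <;> simp
        rw [hsplit, map_add]
        congr 1
        · exact (hasDerivAt_sliceT hWd).deriv.symm
        · exact fderiv_apply_vec hWd
      rwa [hval] at h2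
    -- Claim 3 : derivative along the trajectory, Cauchy-formula form
    have hfun : (fun s => ω (X (A x t) s) s i)
        = fun s => ∑ j, fderiv ℝ (fun z : (Fin 3 → ℝ) × ℝ => X z.1 z.2 i) (A x t, s)
            (Pi.single j 1, 0) * ω₀ (A x t) j := by
      funext s
      rw [hω (X (A x t) s) s i, hAX (A x t) s]
      exact Finset.sum_congr rfl fun j _ => by rw [hpdX]
    have hc3 : HasDerivAt (fun s => ω (X (A x t) s) s i)
        (∑ j, ω x t j * pd (fun y => u y t i) x j) t := by
      rw [hfun]
      have hterm : ∀ j : Fin 3, HasDerivAt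
          (fun s => fderiv ℝ (fun z : (Fin 3 → ℝ) × ℝ => X z.1 z.2 i) (A x t, s)
              (Pi.single j 1, 0) * ω₀ (A x t) j)
          (fderiv ℝ (fderiv ℝ (fun z : (Fin 3 → ℝ) × ℝ => X z.1 z.2 i)) (A x t, t)
              ((0:Fin 3 → ℝ), (1:ℝ)) (Pi.single j 1, 0) * ω₀ (A x t) j) t := by
        intro j
        have h1 : HasDerivAt (fun s => fderiv ℝ (fun z : (Fin 3 → ℝ) × ℝ => X z.1 z.2 i) (A x t, s))
            (fderiv ℝ (fderiv ℝ (fun z : (Fin 3 → ℝ) × ℝ => X z.1 z.2 i)) (A x t, t)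
              ((0:Fin 3 → ℝ), (1:ℝ))) t :=
          hasDerivAt_sliceT ((hDZi i).differentiable (by simp) (A x t, t))
        have h2 := h1.clm_apply
          (hasDerivAt_const t (((Pi.single j 1 : Fin 3 → ℝ), (0:ℝ)) : (Fin 3 → ℝ) × ℝ))
        simpa using h2.mul_const (ω₀ (A x t) j)
      have hsum := HasDerivAt.sum (fun j (_ : j ∈ Finset.univ) => hterm j)
      have hval3 : (∑ j, fderiv ℝ (fderiv ℝ (fun z : (Fin 3 → ℝ) × ℝ => X z.1 z.2 i)) (A x t, t)
            ((0:Fin 3 → ℝ), (1:ℝ)) (Pi.single j 1, 0) * ω₀ (A x t) j)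
          = ∑ j, ω x t j * pd (fun y => u y t i) x j := by
        -- symmetry of second derivatives
        have hsym : ∀ j : Fin 3,
            fderiv ℝ (fderiv ℝ (fun z : (Fin 3 → ℝ) × ℝ => X z.1 z.2 i)) (A x t, t)
                ((0:Fin 3 → ℝ), (1:ℝ)) (Pi.single j 1, 0)
              = fderiv ℝ (fderiv ℝ (fun z : (Fin 3 → ℝ) × ℝ => X z.1 z.2 i)) (A x t, t)
                (Pi.single j 1, 0) ((0:Fin 3 → ℝ), (1:ℝ)) :=
          fun j => second_derivative_symmetric
            (fun y => ((hZi i).differentiable (by simp) y).hasFDerivAt)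
            (((hDZi i).differentiable (by simp) (A x t, t)).hasFDerivAt) _ _
        have hswap : ∀ j : Fin 3,
            fderiv ℝ (fderiv ℝ (fun z : (Fin 3 → ℝ) × ℝ => X z.1 z.2 i)) (A x t, t)
                (Pi.single j 1, 0) ((0:Fin 3 → ℝ), (1:ℝ))
              = fderiv ℝ (fun z : (Fin 3 → ℝ) × ℝ =>
                  fderiv ℝ (fun z : (Fin 3 → ℝ) × ℝ => X z.1 z.2 i) z ((0:Fin 3 → ℝ), (1:ℝ)))
                  (A x t, t) (Pi.single j 1, 0) := by
          intro j
          rw [fderiv_clm_apply ((hDZi i).differentiable (by simp) (A x t, t))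
            (differentiableAt_const _)]
          simp
        -- the time derivative of X is u along the flow, as functions
        have hflowpt : (fun z : (Fin 3 → ℝ) × ℝ =>
              fderiv ℝ (fun z : (Fin 3 → ℝ) × ℝ => X z.1 z.2 i) z ((0:Fin 3 → ℝ), (1:ℝ)))
            = fun z : (Fin 3 → ℝ) × ℝ => u (X z.1 z.2) z.2 i := by
          funext z
          have hd : DifferentiableAt ℝ (fun z : (Fin 3 → ℝ) × ℝ => X z.1 z.2 i) (z.1, z.2) :=
            (hZi i).differentiable (by simp) _
          have h1 : HasDerivAt (fun s => X z.1 s i)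
              (fderiv ℝ (fun z : (Fin 3 → ℝ) × ℝ => X z.1 z.2 i) (z.1, z.2)
                ((0:Fin 3 → ℝ), (1:ℝ))) z.2 := hasDerivAt_sliceT hd
          have h2 : HasDerivAt (fun s => X z.1 s i) (u (X z.1 z.2) z.2 i) z.2 :=
            hasDerivAt_pi.1 (hcurve z.1 z.2) i
          exact h1.unique h2
        -- chain rule for u along the flow
        have hchain : ∀ j : Fin 3,
            fderiv ℝ (fun z : (Fin 3 → ℝ) × ℝ => u (X z.1 z.2) z.2 i) (A x t, t)
                (Pi.single j 1, 0)
              = fderiv ℝ (fun w : (Fin 3 → ℝ) × ℝ => u w.1 w.2 i) (x, t)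
                ((fderiv ℝ (fun z : (Fin 3 → ℝ) × ℝ => X z.1 z.2) (A x t, t)
                  (Pi.single j 1, 0), 0)) := by
          intro j
          have hg : HasFDerivAt (fun z : (Fin 3 → ℝ) × ℝ => ((X z.1 z.2, z.2) : (Fin 3 → ℝ) × ℝ))
              (((fderiv ℝ (fun z : (Fin 3 → ℝ) × ℝ => X z.1 z.2) (A x t, t)).prod
                (ContinuousLinearMap.snd ℝ (Fin 3 → ℝ) ℝ))) (A x t, t) :=
            (hZd (A x t, t)).hasFDerivAt.prodMk (hasFDerivAt_snd)
          have hUd : HasFDerivAt (fun w : (Fin 3 → ℝ) × ℝ => u w.1 w.2 i)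
              (fderiv ℝ (fun w : (Fin 3 → ℝ) × ℝ => u w.1 w.2 i) (X (A x t) t, t))
              (X (A x t) t, t) := ((hUi i).differentiable (by simp) _).hasFDerivAt
          have h : HasFDerivAt (fun z : (Fin 3 → ℝ) × ℝ => u (X z.1 z.2) z.2 i)
              ((fderiv ℝ (fun w : (Fin 3 → ℝ) × ℝ => u w.1 w.2 i) (X (A x t) t, t)).comp
                ((fderiv ℝ (fun z : (Fin 3 → ℝ) × ℝ => X z.1 z.2) (A x t, t)).prod
                  (ContinuousLinearMap.snd ℝ (Fin 3 → ℝ) ℝ))) (A x t, t) :=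
            by have := hUd.comp (A x t, t) hg; exact this
          rw [h.fderiv, hax]
          simp
        -- sum identity
        have hsumD : ((ω x t, (0:ℝ)) : (Fin 3 → ℝ) × ℝ)
            = ∑ j, ω₀ (A x t) j •
              (((fderiv ℝ (fun z : (Fin 3 → ℝ) × ℝ => X z.1 z.2) (A x t, t)
                (Pi.single j 1, 0) : Fin 3 → ℝ), (0:ℝ)) : (Fin 3 → ℝ) × ℝ) := by
          ext k
          · rw [Prod.fst_sum]
            simp only [Prod.smul_mk, Prod.fst]
            rw [Finset.sum_apply]
            rw [hω x t k]
            refine Finset.sum_congr rfl fun j _ => ?_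
            rw [hpdX, ← hveccomp]
            simp [mul_comm]
          · rw [Prod.snd_sum]
            simp
        have hUdx : DifferentiableAt ℝ (fun w : (Fin 3 → ℝ) × ℝ => u w.1 w.2 i) (x, t) :=
          (hUi i).differentiable (by simp) _
        calc (∑ j, fderiv ℝ (fderiv ℝ (fun z : (Fin 3 → ℝ) × ℝ => X z.1 z.2 i)) (A x t, t)
              ((0:Fin 3 → ℝ), (1:ℝ)) (Pi.single j 1, 0) * ω₀ (A x t) j)
            = ∑ j, fderiv ℝ (fun w : (Fin 3 → ℝ) × ℝ => u w.1 w.2 i) (x, t)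
                ((fderiv ℝ (fun z : (Fin 3 → ℝ) × ℝ => X z.1 z.2) (A x t, t)
                  (Pi.single j 1, 0), 0)) * ω₀ (A x t) j := by
              refine Finset.sum_congr rfl fun j _ => ?_
              rw [hsym, hswap, hflowpt, hchain]
          _ = fderiv ℝ (fun w : (Fin 3 → ℝ) × ℝ => u w.1 w.2 i) (x, t) (ω x t, 0) := by
              rw [hsumD, map_sum]
              exact (Finset.sum_congr rfl fun j _ => by rw [map_smul, smul_eq_mul, mul_comm]).symm
          _ = ∑ j, ω x t j * pd (fun y => u y t i) x j := fderiv_apply_vec hUdx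
      rw [← hval3]
      exact hsum
    exact hc2.unique hc3
  · intro x
    have hA0 : A x 0 = x := by
      have h := hXA x 0
      rwa [hinit (A x 0)] at h
    funext i
    rw [hω x 0 i, hA0]
    have hXid : ∀ j : Fin 3, pd (fun b => X b 0 i) x j = (Pi.single j 1 : Fin 3 → ℝ) i := by
      intro j
      have he : (fun b : Fin 3 → ℝ => X b 0 i) = fun b => b i := by
        funext b; rw [hinit]
      rw [pd, he, (hasFDerivAt_apply (𝕜 := ℝ) i x).fderiv]
      rfl
    rw [Finset.sum_congr rfl fun j _ => by rw [hXid]]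
    simp [Pi.single_apply]
end

section
/- (Forced Weber formula, inviscid case.) Let u : ℝⁿ × ℝ → ℝⁿ be a smooth divergence-free vector field, X a smooth flow map of u whose spatial inverse A(·,t) is smooth jointly in x and t, u₀ : ℝⁿ → ℝⁿ and f : ℝⁿ × ℝ → ℝⁿ smooth. Define φ(a,t) = u₀(a) + ∫₀ᵗ (∇X(a,s))ᵀ f(X(a,s),s) ds, let p : ℝⁿ × ℝ → ℝ be smooth, and set w = (∇A)ᵀ (φ∘A) − ∇p, where (φ∘A)(x,t) = φ(A(x,t),t). Then w satisfies ∂ₜw + (u·∇)w + (∇u)ᵀ w + ∇q = f, where q = ∂ₜp + (u·∇)p. -/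
open intervalIntegral MeasureTheory Topology Set

namespace WeberAux

variable {d : ℕ} {F : Type*} [NormedAddCommGroup F] [NormedSpace ℝ F]

lemma vec_decomp (v : Fin d → ℝ) : v = ∑ k, v k • (Pi.single k 1 : Fin d → ℝ) := by
  have h1 : ∀ k, v k • (Pi.single k 1 : Fin d → ℝ) = Pi.single k (v k) := by
    intro k; rw [← Pi.single_smul, smul_eq_mul, mul_one]
  simp only [h1, Finset.univ_sum_single]

lemma pair_decomp (v : Fin d → ℝ) (c : ℝ) :
    (v, c) = c • ((0 : Fin d → ℝ), (1:ℝ)) + ∑ k, v k • ((Pi.single k 1 : Fin d → ℝ), (0:ℝ)) := by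
  ext
  · simp only [Prod.smul_mk, smul_zero, smul_eq_mul, mul_one, Prod.fst_add, Prod.fst_sum]
    have := congrFun (vec_decomp v) ‹_›
    simpa [Finset.sum_apply] using this
  · simp only [Prod.smul_mk, smul_zero, smul_eq_mul, mul_one, Prod.snd_add, Prod.snd_sum]
    simp

lemma clm_pair_apply (L : ((Fin d → ℝ) × ℝ) →L[ℝ] F) (v : Fin d → ℝ) (c : ℝ) :
    L (v, c) = c • L (0, 1) + ∑ k, v k • L (Pi.single k 1, 0) := by
  conv_lhs => rw [pair_decomp v c]
  rw [map_add, L.map_smul, map_sum]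
  refine congrArg _ (Finset.sum_congr rfl fun k _ => ?_)
  rw [L.map_smul]

lemma hasFDerivAt_slice {h : (Fin d → ℝ) × ℝ → F} {L : ((Fin d → ℝ) × ℝ) →L[ℝ] F}
    {x : Fin d → ℝ} {t : ℝ} (hh : HasFDerivAt h L (x, t)) :
    HasFDerivAt (fun y => h (y, t))
      (L.comp ((ContinuousLinearMap.id ℝ (Fin d → ℝ)).prod 0)) x :=
  hh.comp x (HasFDerivAt.prodMk (hasFDerivAt_id x) (hasFDerivAt_const t x))

lemma hasDerivAt_slice {h : (Fin d → ℝ) × ℝ → F} {L : ((Fin d → ℝ) × ℝ) →L[ℝ] F}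
    {x : Fin d → ℝ} {t : ℝ} (hh : HasFDerivAt h L (x, t)) :
    HasDerivAt (fun s => h (x, s)) (L (0, 1)) t :=
  hh.comp_hasDerivAt t (HasDerivAt.prodMk (hasDerivAt_const t x) (hasDerivAt_id t))

lemma pd_slice {h : (Fin d → ℝ) × ℝ → F} {L : ((Fin d → ℝ) × ℝ) →L[ℝ] F}
    {x : Fin d → ℝ} {t : ℝ} (hh : HasFDerivAt h L (x, t)) (j : Fin d) :
    pd (fun y => h (y, t)) x j = L (Pi.single j 1, 0) := by
  rw [pd, (hasFDerivAt_slice hh).fderiv]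
  simp

end WeberAux


open intervalIntegral MeasureTheory Topology Set

namespace WeberAux

variable {d : ℕ}

lemma fderiv_component {E₀ : Type*} [NormedAddCommGroup E₀] [NormedSpace ℝ E₀]
    {g : E₀ → (Fin d → ℝ)} {z : E₀} (hg : DifferentiableAt ℝ g z) (j : Fin d) :
    fderiv ℝ (fun z' => g z' j) z
      = (ContinuousLinearMap.proj (R := ℝ) (φ := fun _ : Fin d => ℝ) j).comp (fderiv ℝ g z) := by
  rw [show (fun z' => g z' j)
      = (ContinuousLinearMap.proj (R := ℝ) (φ := fun _ : Fin d => ℝ) j) ∘ g from rfl,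
    fderiv_comp z (ContinuousLinearMap.proj j).differentiableAt hg,
    ContinuousLinearMap.fderiv]

lemma dui {G : (Fin d → ℝ) × ℝ → ℝ} (hG : ContDiff ℝ 2 G) (z₀ : (Fin d → ℝ) × ℝ) :
    ∃ L : ((Fin d → ℝ) × ℝ) →L[ℝ] ℝ,
      HasFDerivAt (fun z : (Fin d → ℝ) × ℝ => ∫ s in (0:ℝ)..z.2, G (z.1, s)) L z₀ ∧
      L (0, 1) = G z₀ := by
  classical
  have hGd : Differentiable ℝ G := hG.differentiable (by norm_num)
  have hGc : Continuous G := hGd.continuous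
  -- rescaling
  have hre : (fun z : (Fin d → ℝ) × ℝ => ∫ s in (0:ℝ)..z.2, G (z.1, s))
      = fun z => z.2 • ∫ σ in (0:ℝ)..1, G (z.1, z.2 * σ) := by
    funext z
    have h := intervalIntegral.smul_integral_comp_mul_left
      (f := fun s => G (z.1, s)) (a := (0:ℝ)) (b := (1:ℝ)) z.2
    rw [mul_zero, mul_one] at h
    rw [← h]
  set H : ((Fin d → ℝ) × ℝ) → ℝ → ℝ := fun z σ => G (z.1, z.2 * σ) with hHdef
  have hinner : ∀ σ : ℝ, ContDiff ℝ 2 (fun z : (Fin d → ℝ) × ℝ => (z.1, z.2 * σ)) := by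
    intro σ
    exact contDiff_fst.prodMk (contDiff_snd.mul contDiff_const)
  have hH2 : ∀ σ, ContDiff ℝ 2 (fun z => H z σ) := fun σ => hG.comp (hinner σ)
  set H' : ((Fin d → ℝ) × ℝ) → ℝ → (((Fin d → ℝ) × ℝ) →L[ℝ] ℝ) :=
    fun z σ => fderiv ℝ (fun z' => H z' σ) z with hH'def
  -- joint continuity of H'
  have hH'c : Continuous (fun w : ((Fin d → ℝ) × ℝ) × ℝ => H' w.1 w.2) := by
    have huncurry : ContDiff ℝ 2
        (fun w : (((Fin d → ℝ) × ℝ) × ℝ) × ((Fin d → ℝ) × ℝ) => H w.2 w.1.2) := by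
      exact hG.comp ((contDiff_fst.comp contDiff_snd).prodMk
        ((contDiff_snd.comp contDiff_snd).mul (contDiff_snd.comp contDiff_fst)))
    have key : ContDiff ℝ 1
        (fun w : ((Fin d → ℝ) × ℝ) × ℝ => fderiv ℝ (fun z' => H z' w.2) w.1) :=
      ContDiff.fderiv huncurry contDiff_fst (by norm_num)
    exact key.continuous
  -- bound on a compact set
  obtain ⟨C, hC⟩ := ((isCompact_closedBall z₀ 1).prod
    (isCompact_Icc (a := (0:ℝ)) (b := 1))).exists_bound_of_continuousOn hH'c.continuousOn
  -- dominated differentiation of the fixed-interval integral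
  have hHcont : ∀ z : (Fin d → ℝ) × ℝ, Continuous (fun σ => H z σ) := by
    intro z
    exact hGc.comp (continuous_const.prodMk (continuous_const.mul continuous_id))
  have hH'z₀cont : Continuous (fun σ => H' z₀ σ) := hH'c.comp (Continuous.prodMk_right z₀)
  have hmeas : ∀ᶠ z in nhds z₀, AEStronglyMeasurable (H z) (volume.restrict (Set.uIoc (0:ℝ) 1)) :=
    Filter.Eventually.of_forall fun z => (hHcont z).aestronglyMeasurable
  have hF_int : IntervalIntegrable (H z₀) volume 0 1 := (hHcont z₀).intervalIntegrable _ _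
  have hF'_meas : AEStronglyMeasurable (H' z₀) (volume.restrict (Set.uIoc (0:ℝ) 1)) :=
    hH'z₀cont.aestronglyMeasurable
  have h_bound : ∀ᵐ σ ∂(volume : Measure ℝ), σ ∈ Set.uIoc (0:ℝ) 1 →
      ∀ z ∈ Metric.ball z₀ 1, ‖H' z σ‖ ≤ C := by
    refine Filter.Eventually.of_forall fun σ hσ z hz => hC (z, σ) ⟨Metric.ball_subset_closedBall hz, ?_⟩
    rw [Set.uIoc_of_le zero_le_one] at hσ
    exact Ioc_subset_Icc_self hσ
  have h_diff : ∀ᵐ σ ∂(volume : Measure ℝ), σ ∈ Set.uIoc (0:ℝ) 1 →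
      ∀ z ∈ Metric.ball z₀ 1, HasFDerivAt (fun z => H z σ) (H' z σ) z :=
    Filter.Eventually.of_forall fun σ _ z _ => ((hH2 σ).differentiable (by norm_num) z).hasFDerivAt
  have hM := intervalIntegral.hasFDerivAt_integral_of_dominated_of_fderiv_le
    (μ := volume) (F := H) (F' := H') (x₀ := z₀) (a := 0) (b := 1) (bound := fun _ => C)
    (Metric.ball_mem_nhds z₀ zero_lt_one) hmeas hF_int hF'_meas h_bound (intervalIntegrable_const) h_diff
  have hsnd : HasFDerivAt (fun z : (Fin d → ℝ) × ℝ => z.2)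
      (ContinuousLinearMap.snd ℝ (Fin d → ℝ) ℝ) z₀ := hasFDerivAt_snd
  have hΦ := hsnd.smul hM
  rw [hre]
  refine ⟨_, hΦ, ?_⟩
  -- compute the value at (0,1)
  have hint : Integrable (fun σ => H' z₀ σ) (volume.restrict (Ioc (0:ℝ) 1)) :=
    hH'z₀cont.integrableOn_Ioc
  have hA : (∫ σ in (0:ℝ)..1, H' z₀ σ) ((0 : Fin d → ℝ), (1:ℝ))
      = ∫ σ in (0:ℝ)..1, (H' z₀ σ) ((0 : Fin d → ℝ), (1:ℝ)) := by
    rw [intervalIntegral.integral_of_le zero_le_one, intervalIntegral.integral_of_le zero_le_one]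
    exact ContinuousLinearMap.integral_apply hint _
  set D1 : ℝ → ℝ := fun σ => fderiv ℝ G (z₀.1, z₀.2 * σ) ((0 : Fin d → ℝ), (1:ℝ)) with hD1def
  have hptw : ∀ σ : ℝ, (H' z₀ σ) ((0 : Fin d → ℝ), (1:ℝ)) = σ * D1 σ := by
    intro σ
    have hin : HasFDerivAt (fun z : (Fin d → ℝ) × ℝ => (z.1, z.2 * σ))
        ((ContinuousLinearMap.fst ℝ (Fin d → ℝ) ℝ).prod
          (σ • ContinuousLinearMap.snd ℝ (Fin d → ℝ) ℝ)) z₀ :=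
      HasFDerivAt.prodMk hasFDerivAt_fst (hasFDerivAt_snd.mul_const σ)
    have hcomp := ((hGd (z₀.1, z₀.2 * σ)).hasFDerivAt).comp z₀ hin
    have heq : H' z₀ σ = (fderiv ℝ G (z₀.1, z₀.2 * σ)).comp
        ((ContinuousLinearMap.fst ℝ (Fin d → ℝ) ℝ).prod
          (σ • ContinuousLinearMap.snd ℝ (Fin d → ℝ) ℝ)) := hcomp.fderiv
    rw [heq]
    have h01 : ((0 : Fin d → ℝ), σ) = σ • (((0 : Fin d → ℝ), (1:ℝ)) : (Fin d → ℝ) × ℝ) := by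
      simp
    simp only [ContinuousLinearMap.comp_apply, ContinuousLinearMap.prod_apply,
      ContinuousLinearMap.coe_fst', ContinuousLinearMap.smul_apply,
      ContinuousLinearMap.coe_snd', smul_eq_mul, mul_one]
    rw [h01, (fderiv ℝ G (z₀.1, z₀.2 * σ)).map_smul, smul_eq_mul]
  have hD1c : Continuous D1 := by
    have h1 : Continuous (fderiv ℝ G) := (hG.fderiv_right (m := 1) (by norm_num)).continuous
    have h2 : Continuous (fun σ : ℝ => fderiv ℝ G (z₀.1, z₀.2 * σ)) :=
      h1.comp (continuous_const.prodMk (continuous_const.mul continuous_id))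
    exact (ContinuousLinearMap.apply ℝ ℝ (((0 : Fin d → ℝ), (1:ℝ)) :
      (Fin d → ℝ) × ℝ)).continuous.comp h2
  -- FTC on k σ = σ * G (z₀.1, z₀.2 * σ)
  have hk : ∀ σ ∈ uIcc (0:ℝ) 1,
      HasDerivAt (fun σ => σ * G (z₀.1, z₀.2 * σ)) (H z₀ σ + σ * (z₀.2 * D1 σ)) σ := by
    intro σ _
    have hc : HasDerivAt (fun σ : ℝ => ((z₀.1, z₀.2 * σ) : (Fin d → ℝ) × ℝ))
        (((0 : Fin d → ℝ), z₀.2)) σ :=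
      HasDerivAt.prodMk (hasDerivAt_const σ z₀.1) (by simpa using (hasDerivAt_id σ).const_mul z₀.2)
    have hGcurve : HasDerivAt (fun σ : ℝ => G (z₀.1, z₀.2 * σ)) (z₀.2 * D1 σ) σ := by
      have := ((hGd (z₀.1, z₀.2 * σ)).hasFDerivAt).comp_hasDerivAt σ hc
      rw [show ((0 : Fin d → ℝ), z₀.2) = z₀.2 • (((0 : Fin d → ℝ), (1:ℝ)) : (Fin d → ℝ) × ℝ) by simp,
        (fderiv ℝ G (z₀.1, z₀.2 * σ)).map_smul, smul_eq_mul] at this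
      exact this
    have h3 := (hasDerivAt_id σ).mul hGcurve
    simp only [one_mul, id_eq] at h3
    exact h3
  have hintk : IntervalIntegrable (fun σ => H z₀ σ + σ * (z₀.2 * D1 σ)) volume 0 1 := by
    apply Continuous.intervalIntegrable
    exact (hHcont z₀).add (continuous_id.mul (continuous_const.mul hD1c))
  have hftc := intervalIntegral.integral_eq_sub_of_hasDerivAt hk hintk
  simp only [mul_one, one_mul, mul_zero, zero_mul] at hftc
  -- assemble
  have hsplit : ∫ σ in (0:ℝ)..1, (H z₀ σ + σ * (z₀.2 * D1 σ))
      = (∫ σ in (0:ℝ)..1, H z₀ σ) + ∫ σ in (0:ℝ)..1, σ * (z₀.2 * D1 σ) :=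
    intervalIntegral.integral_add ((hHcont z₀).intervalIntegrable _ _)
      ((continuous_id.mul (continuous_const.mul hD1c)).intervalIntegrable _ _)
  simp only [ContinuousLinearMap.add_apply, ContinuousLinearMap.smul_apply,
    ContinuousLinearMap.smulRight_apply, ContinuousLinearMap.coe_snd', smul_eq_mul, one_smul,
    one_mul]
  rw [hA]
  have : ∫ σ in (0:ℝ)..1, (H' z₀ σ) ((0 : Fin d → ℝ), (1:ℝ)) = ∫ σ in (0:ℝ)..1, σ * D1 σ := by
    apply intervalIntegral.integral_congr
    intro σ _
    exact hptw σ
  have hmul : z₀.2 * ∫ σ in (0:ℝ)..1, σ * D1 σ = ∫ σ in (0:ℝ)..1, σ * (z₀.2 * D1 σ) := by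
    rw [← intervalIntegral.integral_const_mul]
    apply intervalIntegral.integral_congr
    intro σ _
    ring
  rw [this, hmul, add_comm, ← hsplit, hftc, sub_zero]

end WeberAux

section main

lemma final_algebra {d : ℕ} (i : Fin d) (uv fv g α Du P1 P2i : Fin d → ℝ)
    (β Xv : Fin d → Fin d → ℝ) (P201 : ℝ)
    (hX : ∀ k, ∑ j, α j * Xv k j = (Pi.single i 1 : Fin d → ℝ) k) :
    ((∑ j, (g j * (-∑ k, Du k * β j k) + α j * ∑ k, Xv k j * fv k))
        - (P201 + ∑ k, uv k * P2i k))
      + (∑ j, Du j * ((∑ m, g m * β m j) - P1 j))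
      + (P201 + ∑ j, (uv j * P2i j + P1 j * Du j)) = fv i := by
  have h1 : ∑ j, α j * ∑ k, Xv k j * fv k = fv i := by
    calc ∑ j, α j * ∑ k, Xv k j * fv k
        = ∑ j, ∑ k, α j * (Xv k j * fv k) := by simp [Finset.mul_sum]
      _ = ∑ k, ∑ j, α j * (Xv k j * fv k) := Finset.sum_comm
      _ = ∑ k, (∑ j, α j * Xv k j) * fv k := by
          refine Finset.sum_congr rfl fun k _ => ?_
          rw [Finset.sum_mul]
          exact Finset.sum_congr rfl fun j _ => (mul_assoc _ _ _).symm
      _ = ∑ k, (Pi.single i 1 : Fin d → ℝ) k * fv k := by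
          refine Finset.sum_congr rfl fun k _ => ?_
          rw [hX k]
      _ = fv i := by simp [Pi.single_apply, ite_mul]
  have h2 : ∑ j, (g j * (-∑ k, Du k * β j k) + α j * ∑ k, Xv k j * fv k)
      = (-∑ j, ∑ k, g j * (Du k * β j k)) + fv i := by
    rw [Finset.sum_add_distrib, h1]
    congr 1
    rw [← Finset.sum_neg_distrib]
    refine Finset.sum_congr rfl fun j _ => ?_
    rw [mul_neg, Finset.mul_sum]
  have h3 : ∑ j, Du j * ((∑ m, g m * β m j) - P1 j)
      = (∑ j, ∑ k, g k * (Du j * β k j)) - ∑ j, Du j * P1 j := by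
    rw [← Finset.sum_sub_distrib]
    refine Finset.sum_congr rfl fun j _ => ?_
    rw [mul_sub, Finset.mul_sum]
    congr 1
    refine Finset.sum_congr rfl fun m _ => ?_
    ring
  have h4 : ∑ j, ∑ k, g j * (Du k * β j k) = ∑ j, ∑ k, g k * (Du j * β k j) :=
    Finset.sum_comm
  have h5 : ∑ j, (uv j * P2i j + P1 j * Du j)
      = (∑ j, uv j * P2i j) + ∑ j, Du j * P1 j := by
    rw [Finset.sum_add_distrib]
    congr 1
    exact Finset.sum_congr rfl fun j _ => mul_comm _ _
  rw [h2, h3, h4, h5]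
  ring

open WeberAux

set_option maxHeartbeats 2000000 in
/-- Forced Weber formula (inviscid case): with
`φ(a,t) = u₀(a) + ∫₀ᵗ (∇X(a,s))ᵀ f(X(a,s),s) ds` and
`w = (∇A)ᵀ (φ∘A) − ∇p`, one has `∂ₜw + (u·∇)w + (∇u)ᵀ w + ∇q = f` with
`q = ∂ₜp + (u·∇)p`. -/
theorem forced_weber_formula {d : ℕ}
    (u X A : (Fin d → ℝ) → ℝ → Fin d → ℝ)
    (u₀ : (Fin d → ℝ) → Fin d → ℝ)
    (f : (Fin d → ℝ) → ℝ → Fin d → ℝ)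
    (φ : (Fin d → ℝ) → ℝ → Fin d → ℝ)
    (p : (Fin d → ℝ) → ℝ → ℝ)
    (w : (Fin d → ℝ) → ℝ → Fin d → ℝ)
    (q : (Fin d → ℝ) → ℝ → ℝ)
    (hu : ContDiff ℝ (⊤ : ℕ∞) (fun z : (Fin d → ℝ) × ℝ => u z.1 z.2))
    (hdiv : ∀ x t, ∑ i, pd (fun y => u y t i) x i = 0)
    (hX : ContDiff ℝ (⊤ : ℕ∞) (fun z : (Fin d → ℝ) × ℝ => X z.1 z.2))
    (hA : ContDiff ℝ (⊤ : ℕ∞) (fun z : (Fin d → ℝ) × ℝ => A z.1 z.2))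
    (hflow : ∀ a t, deriv (fun s => X a s) t = u (X a t) t)
    (hinit : ∀ a, X a 0 = a)
    (hAX : ∀ a t, A (X a t) t = a)
    (hXA : ∀ x t, X (A x t) t = x)
    (hu₀ : ContDiff ℝ (⊤ : ℕ∞) u₀)
    (hf : ContDiff ℝ (⊤ : ℕ∞) (fun z : (Fin d → ℝ) × ℝ => f z.1 z.2))
    (hφ : ∀ a t i, φ a t i
      = u₀ a i + ∫ s in (0:ℝ)..t, ∑ j, pd (fun b => X b s j) a i * f (X a s) s j)
    (hp : ContDiff ℝ (⊤ : ℕ∞) (fun z : (Fin d → ℝ) × ℝ => p z.1 z.2))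
    (hw : ∀ x t i, w x t i
      = (∑ j, φ (A x t) t j * pd (fun y => A y t j) x i) - pd (fun y => p y t) x i)
    (hq : ∀ x t, q x t
      = deriv (fun s => p x s) t + ∑ j, u x t j * pd (fun y => p y t) x j) :
    ∀ (x : Fin d → ℝ) (t : ℝ) (i : Fin d),
      deriv (fun s => w x s i) t
          + ∑ j, u x t j * pd (fun y => w y t i) x j
          + ∑ j, pd (fun y => u y t j) x i * w x t j
          + pd (fun y => q y t) x i
        = f x t i := by
  intro x t i
  classical
  -- basic smoothness facts
  have hA3 : ContDiff ℝ 3 (fun z : (Fin d → ℝ) × ℝ => A z.1 z.2) := hA.of_le (by exact WithTop.coe_le_coe.mpr le_top)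
  have hX3 : ContDiff ℝ 3 (fun z : (Fin d → ℝ) × ℝ => X z.1 z.2) := hX.of_le (by exact WithTop.coe_le_coe.mpr le_top)
  have hu3 : ContDiff ℝ 3 (fun z : (Fin d → ℝ) × ℝ => u z.1 z.2) := hu.of_le (by exact WithTop.coe_le_coe.mpr le_top)
  have hp3 : ContDiff ℝ 3 (fun z : (Fin d → ℝ) × ℝ => p z.1 z.2) := hp.of_le (by exact WithTop.coe_le_coe.mpr le_top)
  have hf3 : ContDiff ℝ 3 (fun z : (Fin d → ℝ) × ℝ => f z.1 z.2) := hf.of_le (by exact WithTop.coe_le_coe.mpr le_top)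
  have hu₀3 : ContDiff ℝ 3 u₀ := hu₀.of_le (by exact WithTop.coe_le_coe.mpr le_top)
  have hAd : Differentiable ℝ (fun z : (Fin d → ℝ) × ℝ => A z.1 z.2) :=
    hA3.differentiable (by norm_num)
  have hXd : Differentiable ℝ (fun z : (Fin d → ℝ) × ℝ => X z.1 z.2) :=
    hX3.differentiable (by norm_num)
  have hud : Differentiable ℝ (fun z : (Fin d → ℝ) × ℝ => u z.1 z.2) :=
    hu3.differentiable (by norm_num)
  have hAj : ∀ j : Fin d, ContDiff ℝ 3 (fun z : (Fin d → ℝ) × ℝ => A z.1 z.2 j) :=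
    fun j => (contDiff_pi.mp hA3 j)
  have hXj : ∀ j : Fin d, ContDiff ℝ 3 (fun z : (Fin d → ℝ) × ℝ => X z.1 z.2 j) :=
    fun j => (contDiff_pi.mp hX3 j)
  have huj : ∀ j : Fin d, ContDiff ℝ 3 (fun z : (Fin d → ℝ) × ℝ => u z.1 z.2 j) :=
    fun j => (contDiff_pi.mp hu3 j)
  have hAjd : ∀ j, Differentiable ℝ (fun z : (Fin d → ℝ) × ℝ => A z.1 z.2 j) :=
    fun j => (hAj j).differentiable (by norm_num)
  have hujd : ∀ j, Differentiable ℝ (fun z : (Fin d → ℝ) × ℝ => u z.1 z.2 j) :=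
    fun j => (huj j).differentiable (by norm_num)
  have hpd : Differentiable ℝ (fun z : (Fin d → ℝ) × ℝ => p z.1 z.2) :=
    hp3.differentiable (by norm_num)
  -- differentiability of the CLM-valued first-derivative maps
  have hAj' : ∀ j, Differentiable ℝ (fderiv ℝ (fun z : (Fin d → ℝ) × ℝ => A z.1 z.2 j)) :=
    fun j => (ContDiff.fderiv_right (hAj j) (m := 1) (by norm_num)).differentiable one_ne_zero
  have hp' : Differentiable ℝ (fderiv ℝ (fun z : (Fin d → ℝ) × ℝ => p z.1 z.2)) :=
    (ContDiff.fderiv_right hp3 (m := 1) (by norm_num)).differentiable one_ne_zero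
  -- flow derivative
  have hflowD : ∀ a s, HasDerivAt (fun s => X a s) (u (X a s) s) s := by
    intro a s
    have hd : DifferentiableAt ℝ (fun s => X a s) s := by
      have : (fun s => X a s) = (fun z : (Fin d → ℝ) × ℝ => X z.1 z.2) ∘ (fun s => (a, s)) := rfl
      rw [this]
      exact (hXd (a, s)).comp s (DifferentiableAt.prodMk (differentiableAt_const a) differentiableAt_id)
    have := hd.hasDerivAt
    rwa [hflow a s] at this
  -- the key transport identity : ∂ₜA + (u·∇)A = 0, in joint form
  have hKA : ∀ z : (Fin d → ℝ) × ℝ,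
      fderiv ℝ (fun z' : (Fin d → ℝ) × ℝ => A z'.1 z'.2) z (u z.1 z.2, 1) = 0 := by
    rintro ⟨y, s⟩
    have hc : HasDerivAt (fun s' => ((X (A y s) s', s') : (Fin d → ℝ) × ℝ))
        (u (X (A y s) s) s, 1) s := HasDerivAt.prodMk (hflowD (A y s) s) (hasDerivAt_id s)
    have hcomp : HasDerivAt ((fun z' : (Fin d → ℝ) × ℝ => A z'.1 z'.2)
        ∘ (fun s' => ((X (A y s) s', s') : (Fin d → ℝ) × ℝ)))
        (fderiv ℝ (fun z' : (Fin d → ℝ) × ℝ => A z'.1 z'.2) (X (A y s) s, s)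
          (u (X (A y s) s) s, 1)) s :=
      HasFDerivAt.comp_hasDerivAt s ((hAd (X (A y s) s, s)).hasFDerivAt) hc
    have hconst : ((fun z' : (Fin d → ℝ) × ℝ => A z'.1 z'.2) ∘ (fun s' => ((X (A y s) s', s') : (Fin d → ℝ) × ℝ)))
        = fun _ => A y s := by
      funext s'
      exact hAX (A y s) s'
    rw [hconst] at hcomp
    have h0 := hcomp.unique (hasDerivAt_const s (A y s))
    rw [hXA y s] at h0
    exact h0
  -- componentwise transport identity
  have hKAj : ∀ (j : Fin d) (z : (Fin d → ℝ) × ℝ),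
      fderiv ℝ (fun z' : (Fin d → ℝ) × ℝ => A z'.1 z'.2 j) z (u z.1 z.2, 1) = 0 := by
    intro j z
    rw [fderiv_component (hAd z) j]
    simp [hKA z]
  -- ∇X(A x t, t) ∘ ∇ₓA(x,t) = Id, componentwise
  have hKX : ∀ k : Fin d,
      ∑ j, fderiv ℝ (fun z : (Fin d → ℝ) × ℝ => A z.1 z.2 j) (x, t) (Pi.single i 1, 0)
        * fderiv ℝ (fun z : (Fin d → ℝ) × ℝ => X z.1 z.2 k) (A x t, t) (Pi.single j 1, 0)
      = (Pi.single i 1 : Fin d → ℝ) k := by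
    intro k
    have hmA : HasFDerivAt (fun z : (Fin d → ℝ) × ℝ => ((A z.1 z.2 : Fin d → ℝ), z.2))
        ((fderiv ℝ (fun z : (Fin d → ℝ) × ℝ => A z.1 z.2) (x, t)).prod
          (ContinuousLinearMap.snd ℝ (Fin d → ℝ) ℝ)) (x, t) :=
      HasFDerivAt.prodMk (hAd (x, t)).hasFDerivAt hasFDerivAt_snd
    have hinner := hasFDerivAt_slice hmA
    have hXk : HasFDerivAt (fun z : (Fin d → ℝ) × ℝ => X z.1 z.2 k)
        (fderiv ℝ (fun z : (Fin d → ℝ) × ℝ => X z.1 z.2 k) (A x t, t)) (A x t, t) :=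
      ((contDiff_pi.mp hX3 k).differentiable (by norm_num) (A x t, t)).hasFDerivAt
    have hcomp : HasFDerivAt (fun y => X (A y t) t k)
        ((fderiv ℝ (fun z : (Fin d → ℝ) × ℝ => X z.1 z.2 k) (A x t, t)).comp
          ((((fderiv ℝ (fun z : (Fin d → ℝ) × ℝ => A z.1 z.2) (x, t)).prod
            (ContinuousLinearMap.snd ℝ (Fin d → ℝ) ℝ))).comp
              ((ContinuousLinearMap.id ℝ (Fin d → ℝ)).prod 0))) x :=
      by have h := HasFDerivAt.comp x hXk hinner; exact h
    have hfunid : (fun y => X (A y t) t k) = fun y : Fin d → ℝ => y k :=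
      funext fun y => congrFun (hXA y t) k
    rw [hfunid] at hcomp
    have hproj : HasFDerivAt (fun y : Fin d → ℝ => y k)
        (ContinuousLinearMap.proj (R := ℝ) (φ := fun _ : Fin d => ℝ) k) x :=
      (ContinuousLinearMap.proj (R := ℝ) (φ := fun _ : Fin d => ℝ) k).hasFDerivAt
    have huniq := hcomp.unique hproj
    have happ := congrArg (fun (L : (Fin d → ℝ) →L[ℝ] ℝ) => L (Pi.single i 1)) huniq
    simp only [ContinuousLinearMap.comp_apply, ContinuousLinearMap.prod_apply,
      ContinuousLinearMap.coe_id', ContinuousLinearMap.zero_apply, id_eq,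
      ContinuousLinearMap.coe_snd', ContinuousLinearMap.proj_apply] at happ
    -- happ : fderiv Xk (A x t, t) (fderiv AA (x,t) (single i 1, 0), 0) = single i 1 k
    rw [clm_pair_apply (fderiv ℝ (fun z : (Fin d → ℝ) × ℝ => X z.1 z.2 k) (A x t, t))
      (fderiv ℝ (fun z : (Fin d → ℝ) × ℝ => A z.1 z.2) (x, t) (Pi.single i 1, 0)) 0] at happ
    rw [← happ]
    simp only [smul_eq_mul]
    rw [zero_mul, zero_add]
    refine Finset.sum_congr rfl fun j _ => ?_
    rw [fderiv_component (hAd (x, t)) j]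
    rfl
  -- symmetry of second derivatives
  have hsymA : ∀ j : Fin d, IsSymmSndFDerivAt ℝ (fun z : (Fin d → ℝ) × ℝ => A z.1 z.2 j) (x, t) :=
    fun j => (hAj j).contDiffAt.isSymmSndFDerivAt (by norm_num)
  have hsymP : IsSymmSndFDerivAt ℝ (fun z : (Fin d → ℝ) × ℝ => p z.1 z.2) (x, t) :=
    hp3.contDiffAt.isSymmSndFDerivAt (by norm_num)
  -- second derivative transport identity for A
  have hI2 : ∀ j : Fin d,
      fderiv ℝ (fderiv ℝ (fun z : (Fin d → ℝ) × ℝ => A z.1 z.2 j)) (x, t)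
          (Pi.single i 1, 0) (u x t, 1)
        = - fderiv ℝ (fun z : (Fin d → ℝ) × ℝ => A z.1 z.2 j) (x, t)
            (fderiv ℝ (fun z : (Fin d → ℝ) × ℝ => u z.1 z.2) (x, t) (Pi.single i 1, 0), 0) := by
    intro j
    have hvec : HasFDerivAt (fun z : (Fin d → ℝ) × ℝ => ((u z.1 z.2 : Fin d → ℝ), (1:ℝ)))
        ((fderiv ℝ (fun z : (Fin d → ℝ) × ℝ => u z.1 z.2) (x, t)).prod 0) (x, t) :=
      HasFDerivAt.prodMk (hud (x, t)).hasFDerivAt (hasFDerivAt_const (1:ℝ) (x, t))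
    have hclm := (((hAj' j) (x, t)).hasFDerivAt).clm_apply hvec
    rw [show (fun z : (Fin d → ℝ) × ℝ =>
        (fderiv ℝ (fun z' : (Fin d → ℝ) × ℝ => A z'.1 z'.2 j) z) (u z.1 z.2, 1))
      = fun _ => (0:ℝ) from funext fun z => hKAj j z] at hclm
    have hzero := hclm.unique (hasFDerivAt_const (0:ℝ) (x, t))
    have happ := congrArg (fun (L : ((Fin d → ℝ) × ℝ) →L[ℝ] ℝ) => L (Pi.single i 1, 0)) hzero.symm
    simp only [ContinuousLinearMap.add_apply, ContinuousLinearMap.comp_apply,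
      ContinuousLinearMap.prod_apply, ContinuousLinearMap.zero_apply,
      ContinuousLinearMap.flip_apply] at happ
    -- happ : 0 = fderiv Aj (x,t) (fderiv u (x,t) ei', 0) + fderiv² Aj (x,t) ei' (u x t, 1)
    linarith [happ]
  -- pd ↦ joint-fderiv conversion for X components
  have hpdX : ∀ (aa : Fin d → ℝ) (s : ℝ) (k : Fin d) (j : Fin d), pd (fun b => X b s k) aa j
      = fderiv ℝ (fun z : (Fin d → ℝ) × ℝ => X z.1 z.2 k) (aa, s) (Pi.single j 1, 0) :=
    fun aa s k j => pd_slice (((contDiff_pi.mp hX3 k).differentiable (by norm_num))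
      (aa, s)).hasFDerivAt j
  -- derivative package for the components of φ at (A x t, t)
  have hΦ : ∀ j : Fin d, ∃ M : ((Fin d → ℝ) × ℝ) →L[ℝ] ℝ,
      HasFDerivAt (fun z : (Fin d → ℝ) × ℝ => φ z.1 z.2 j) M (A x t, t) ∧
      M (0, 1) = ∑ k, fderiv ℝ (fun z : (Fin d → ℝ) × ℝ => X z.1 z.2 k) (A x t, t)
          (Pi.single j 1, 0) * f x t k := by
    intro j
    set G : (Fin d → ℝ) × ℝ → ℝ := fun w => ∑ k, fderiv ℝ
        (fun z : (Fin d → ℝ) × ℝ => X z.1 z.2 k) w (Pi.single j 1, 0) * f (X w.1 w.2) w.2 k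
      with hGdef
    have hGsm : ContDiff ℝ 2 G := by
      apply ContDiff.sum; intro k _
      apply ContDiff.mul
      · exact ((hXj k).fderiv_right (m := 2) (by norm_num)).clm_apply contDiff_const
      · exact ((contDiff_pi.mp hf3 k).of_le (by norm_num)).comp
          ((hX3.of_le (by norm_num : (2:WithTop ℕ∞) ≤ 3)).prodMk contDiff_snd)
    have hφfun : (fun z : (Fin d → ℝ) × ℝ => φ z.1 z.2 j)
        = fun z => u₀ z.1 j + ∫ s in (0:ℝ)..z.2, G (z.1, s) := by
      funext z
      rw [hφ z.1 z.2 j]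
      simp only [hGdef, hpdX]
    obtain ⟨L, hL, hL01⟩ := dui hGsm (A x t, t)
    have hu₀j : HasFDerivAt (fun z : (Fin d → ℝ) × ℝ => u₀ z.1 j)
        ((fderiv ℝ (fun a => u₀ a j) (A x t)).comp
          (ContinuousLinearMap.fst ℝ (Fin d → ℝ) ℝ)) (A x t, t) :=
      by have h := ((((contDiff_pi.mp hu₀3 j).differentiable (by norm_num))
        (A x t)).hasFDerivAt).comp (f := @Prod.fst (Fin d → ℝ) ℝ) (A x t, t) (hasFDerivAt_fst (p := (A x t, t))); exact h
    refine ⟨_, by rw [hφfun]; exact hu₀j.add hL, ?_⟩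
    simp only [ContinuousLinearMap.add_apply, ContinuousLinearMap.comp_apply,
      ContinuousLinearMap.coe_fst']
    rw [hL01]
    simp only [hGdef, hXA x t]
    simp
  -- joint derivative of the A ∘ snd pair map at (x,t)
  have hmA : HasFDerivAt (fun z : (Fin d → ℝ) × ℝ => ((A z.1 z.2 : Fin d → ℝ), z.2))
      ((fderiv ℝ (fun z : (Fin d → ℝ) × ℝ => A z.1 z.2) (x, t)).prod
        (ContinuousLinearMap.snd ℝ (Fin d → ℝ) ℝ)) (x, t) :=
    HasFDerivAt.prodMk (hAd (x, t)).hasFDerivAt hasFDerivAt_snd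
  -- derivative package for g_j := φ(A z) z j at (x,t)
  have hgj : ∀ j : Fin d, ∃ N : ((Fin d → ℝ) × ℝ) →L[ℝ] ℝ,
      HasFDerivAt (fun z : (Fin d → ℝ) × ℝ => φ (A z.1 z.2) z.2 j) N (x, t) ∧
      N (u x t, 1) = ∑ k, fderiv ℝ (fun z : (Fin d → ℝ) × ℝ => X z.1 z.2 k) (A x t, t)
          (Pi.single j 1, 0) * f x t k := by
    intro j
    obtain ⟨M, hM, hM01⟩ := hΦ j
    have hcomp : HasFDerivAt (fun z : (Fin d → ℝ) × ℝ => φ (A z.1 z.2) z.2 j)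
        (M.comp ((fderiv ℝ (fun z : (Fin d → ℝ) × ℝ => A z.1 z.2) (x, t)).prod
          (ContinuousLinearMap.snd ℝ (Fin d → ℝ) ℝ))) (x, t) :=
      by have h := HasFDerivAt.comp (x, t) hM hmA; exact h
    refine ⟨_, hcomp, ?_⟩
    have h0 : fderiv ℝ (fun z : (Fin d → ℝ) × ℝ => A z.1 z.2) (x, t) (u x t, 1) = 0 :=
      hKA (x, t)
    rw [ContinuousLinearMap.comp_apply, ContinuousLinearMap.prod_apply, h0]
    rw [show (ContinuousLinearMap.snd ℝ (Fin d → ℝ) ℝ) (u x t, 1) = 1 from rfl]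
    exact hM01
  choose N hN hNval using hgj
  -- derivative of z ↦ ∂ᵢA_j(z) and z ↦ ∂ᵢp(z)
  have haij : ∀ j : Fin d, HasFDerivAt
      (fun z : (Fin d → ℝ) × ℝ =>
        fderiv ℝ (fun z' : (Fin d → ℝ) × ℝ => A z'.1 z'.2 j) z (Pi.single i 1, 0))
      ((fderiv ℝ (fun z' : (Fin d → ℝ) × ℝ => A z'.1 z'.2 j) (x, t)).comp 0
        + (fderiv ℝ (fderiv ℝ (fun z' : (Fin d → ℝ) × ℝ => A z'.1 z'.2 j)) (x, t)).flip
            (Pi.single i 1, 0)) (x, t) :=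
    fun j => ((hAj' j (x, t)).hasFDerivAt).clm_apply (hasFDerivAt_const _ _)
  have hpii : HasFDerivAt
      (fun z : (Fin d → ℝ) × ℝ =>
        fderiv ℝ (fun z' : (Fin d → ℝ) × ℝ => p z'.1 z'.2) z (Pi.single i 1, 0))
      ((fderiv ℝ (fun z' : (Fin d → ℝ) × ℝ => p z'.1 z'.2) (x, t)).comp 0
        + (fderiv ℝ (fderiv ℝ (fun z' : (Fin d → ℝ) × ℝ => p z'.1 z'.2)) (x, t)).flip
            (Pi.single i 1, 0)) (x, t) :=
    ((hp' (x, t)).hasFDerivAt).clm_apply (hasFDerivAt_const _ _)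
  -- the function WW and its joint derivative
  have hsumW : HasFDerivAt
      (fun z : (Fin d → ℝ) × ℝ => ∑ j, φ (A z.1 z.2) z.2 j
        * fderiv ℝ (fun z' : (Fin d → ℝ) × ℝ => A z'.1 z'.2 j) z (Pi.single i 1, 0))
      (∑ j, (φ (A x t) t j • ((fderiv ℝ (fun z' : (Fin d → ℝ) × ℝ => A z'.1 z'.2 j) (x, t)).comp 0
        + (fderiv ℝ (fderiv ℝ (fun z' : (Fin d → ℝ) × ℝ => A z'.1 z'.2 j)) (x, t)).flip
            (Pi.single i 1, 0))
        + fderiv ℝ (fun z' : (Fin d → ℝ) × ℝ => A z'.1 z'.2 j) (x, t) (Pi.single i 1, 0) • N j))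
      (x, t) :=
    HasFDerivAt.fun_sum fun j _ => (hN j).mul (haij j)
  have hWW := hsumW.sub hpii
  -- conversion of w to WW
  have hwWW : ∀ z : (Fin d → ℝ) × ℝ, w z.1 z.2 i
      = (∑ j, φ (A z.1 z.2) z.2 j
          * fderiv ℝ (fun z' : (Fin d → ℝ) × ℝ => A z'.1 z'.2 j) z (Pi.single i 1, 0))
        - fderiv ℝ (fun z' : (Fin d → ℝ) × ℝ => p z'.1 z'.2) z (Pi.single i 1, 0) := by
    intro z
    rw [hw z.1 z.2 i]
    congr 1
    · refine Finset.sum_congr rfl fun j _ => ?_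
      congr 1
      exact pd_slice ((hAjd j (z.1, z.2)).hasFDerivAt) i
    · exact pd_slice ((hpd (z.1, z.2)).hasFDerivAt) i
  obtain ⟨LW, hWWL, hLWdef⟩ : ∃ L : ((Fin d → ℝ) × ℝ) →L[ℝ] ℝ,
      HasFDerivAt (fun z : (Fin d → ℝ) × ℝ =>
        (∑ j, φ (A z.1 z.2) z.2 j
          * fderiv ℝ (fun z' : (Fin d → ℝ) × ℝ => A z'.1 z'.2 j) z (Pi.single i 1, 0))
        - fderiv ℝ (fun z' : (Fin d → ℝ) × ℝ => p z'.1 z'.2) z (Pi.single i 1, 0)) L (x, t)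
      ∧ L = (∑ j, (φ (A x t) t j
            • ((fderiv ℝ (fun z' : (Fin d → ℝ) × ℝ => A z'.1 z'.2 j) (x, t)).comp 0
              + (fderiv ℝ (fderiv ℝ (fun z' : (Fin d → ℝ) × ℝ => A z'.1 z'.2 j)) (x, t)).flip
                  (Pi.single i 1, 0))
            + fderiv ℝ (fun z' : (Fin d → ℝ) × ℝ => A z'.1 z'.2 j) (x, t) (Pi.single i 1, 0) • N j))
          - ((fderiv ℝ (fun z' : (Fin d → ℝ) × ℝ => p z'.1 z'.2) (x, t)).comp 0
            + (fderiv ℝ (fderiv ℝ (fun z' : (Fin d → ℝ) × ℝ => p z'.1 z'.2)) (x, t)).flip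
                (Pi.single i 1, 0)) := ⟨_, hWW, rfl⟩
  -- Term 1 : time derivative of w
  have hterm1 : deriv (fun s => w x s i) t = LW ((0 : Fin d → ℝ), (1:ℝ)) := by
    have hfun : (fun s => w x s i) = fun s =>
        (∑ j, φ (A x s) s j
          * fderiv ℝ (fun z' : (Fin d → ℝ) × ℝ => A z'.1 z'.2 j) (x, s) (Pi.single i 1, 0))
        - fderiv ℝ (fun z' : (Fin d → ℝ) × ℝ => p z'.1 z'.2) (x, s) (Pi.single i 1, 0) :=
      funext fun s => hwWW (x, s)
    rw [hfun]
    exact (hasDerivAt_slice hWWL).deriv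
  -- Term 2 : space derivatives of w
  have hterm2 : ∀ k : Fin d, pd (fun y => w y t i) x k
      = LW ((Pi.single k 1 : Fin d → ℝ), (0:ℝ)) := by
    intro k
    have hfun : (fun y => w y t i) = fun y =>
        (∑ j, φ (A y t) t j
          * fderiv ℝ (fun z' : (Fin d → ℝ) × ℝ => A z'.1 z'.2 j) (y, t) (Pi.single i 1, 0))
        - fderiv ℝ (fun z' : (Fin d → ℝ) × ℝ => p z'.1 z'.2) (y, t) (Pi.single i 1, 0) :=
      funext fun y => hwWW (y, t)
    rw [hfun]
    exact pd_slice hWWL k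
  -- Term 3 : ∇u entries and w entries
  have hterm3a : ∀ j : Fin d, pd (fun y => u y t j) x i
      = fderiv ℝ (fun z : (Fin d → ℝ) × ℝ => u z.1 z.2 j) (x, t) (Pi.single i 1, 0) :=
    fun j => pd_slice ((hujd j (x, t)).hasFDerivAt) i
  have hterm3b : ∀ j : Fin d, w x t j
      = (∑ m, φ (A x t) t m
          * fderiv ℝ (fun z' : (Fin d → ℝ) × ℝ => A z'.1 z'.2 m) (x, t) (Pi.single j 1, 0))
        - fderiv ℝ (fun z' : (Fin d → ℝ) × ℝ => p z'.1 z'.2) (x, t) (Pi.single j 1, 0) := by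
    intro j
    rw [hw x t j]
    congr 1
    · refine Finset.sum_congr rfl fun m _ => ?_
      congr 1
      exact pd_slice ((hAjd m (x, t)).hasFDerivAt) j
    · exact pd_slice ((hpd (x, t)).hasFDerivAt) j
  -- Term 4 : pressure-gradient term
  have hqQQ : ∀ z : (Fin d → ℝ) × ℝ, q z.1 z.2
      = fderiv ℝ (fun z' : (Fin d → ℝ) × ℝ => p z'.1 z'.2) z ((0 : Fin d → ℝ), (1:ℝ))
        + ∑ j, u z.1 z.2 j
            * fderiv ℝ (fun z' : (Fin d → ℝ) × ℝ => p z'.1 z'.2) z (Pi.single j 1, 0) := by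
    intro z
    rw [hq z.1 z.2]
    congr 1
    · exact (hasDerivAt_slice ((hpd (z.1, z.2)).hasFDerivAt)).deriv
    · refine Finset.sum_congr rfl fun j _ => ?_
      congr 1
      exact pd_slice ((hpd (z.1, z.2)).hasFDerivAt) j
  have hQ1 : HasFDerivAt
      (fun z : (Fin d → ℝ) × ℝ =>
        fderiv ℝ (fun z' : (Fin d → ℝ) × ℝ => p z'.1 z'.2) z ((0 : Fin d → ℝ), (1:ℝ)))
      ((fderiv ℝ (fun z' : (Fin d → ℝ) × ℝ => p z'.1 z'.2) (x, t)).comp 0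
        + (fderiv ℝ (fderiv ℝ (fun z' : (Fin d → ℝ) × ℝ => p z'.1 z'.2)) (x, t)).flip
            ((0 : Fin d → ℝ), (1:ℝ))) (x, t) :=
    ((hp' (x, t)).hasFDerivAt).clm_apply (hasFDerivAt_const _ _)
  have hQ2 : HasFDerivAt
      (fun z : (Fin d → ℝ) × ℝ => ∑ j, u z.1 z.2 j
        * fderiv ℝ (fun z' : (Fin d → ℝ) × ℝ => p z'.1 z'.2) z (Pi.single j 1, 0))
      (∑ j, (u x t j • ((fderiv ℝ (fun z' : (Fin d → ℝ) × ℝ => p z'.1 z'.2) (x, t)).comp 0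
        + (fderiv ℝ (fderiv ℝ (fun z' : (Fin d → ℝ) × ℝ => p z'.1 z'.2)) (x, t)).flip
            (Pi.single j 1, 0))
        + fderiv ℝ (fun z' : (Fin d → ℝ) × ℝ => p z'.1 z'.2) (x, t) (Pi.single j 1, 0)
            • fderiv ℝ (fun z' : (Fin d → ℝ) × ℝ => u z'.1 z'.2 j) (x, t))) (x, t) :=
    HasFDerivAt.fun_sum fun j _ => ((hujd j (x, t)).hasFDerivAt).mul
      (((hp' (x, t)).hasFDerivAt).clm_apply (hasFDerivAt_const _ _))
  obtain ⟨LQ, hQL, hLQdef⟩ : ∃ L : ((Fin d → ℝ) × ℝ) →L[ℝ] ℝ,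
      HasFDerivAt (fun z : (Fin d → ℝ) × ℝ =>
        fderiv ℝ (fun z' : (Fin d → ℝ) × ℝ => p z'.1 z'.2) z ((0 : Fin d → ℝ), (1:ℝ))
        + ∑ j, u z.1 z.2 j
            * fderiv ℝ (fun z' : (Fin d → ℝ) × ℝ => p z'.1 z'.2) z (Pi.single j 1, 0)) L (x, t)
      ∧ L = ((fderiv ℝ (fun z' : (Fin d → ℝ) × ℝ => p z'.1 z'.2) (x, t)).comp 0
        + (fderiv ℝ (fderiv ℝ (fun z' : (Fin d → ℝ) × ℝ => p z'.1 z'.2)) (x, t)).flip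
            ((0 : Fin d → ℝ), (1:ℝ)))
        + (∑ j, (u x t j • ((fderiv ℝ (fun z' : (Fin d → ℝ) × ℝ => p z'.1 z'.2) (x, t)).comp 0
        + (fderiv ℝ (fderiv ℝ (fun z' : (Fin d → ℝ) × ℝ => p z'.1 z'.2)) (x, t)).flip
            (Pi.single j 1, 0))
        + fderiv ℝ (fun z' : (Fin d → ℝ) × ℝ => p z'.1 z'.2) (x, t) (Pi.single j 1, 0)
            • fderiv ℝ (fun z' : (Fin d → ℝ) × ℝ => u z'.1 z'.2 j) (x, t))) :=
    ⟨_, hQ1.add hQ2, rfl⟩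
  have hterm4 : pd (fun y => q y t) x i = LQ ((Pi.single i 1 : Fin d → ℝ), (0:ℝ)) := by
    have hfun : (fun y => q y t) = fun y =>
        fderiv ℝ (fun z' : (Fin d → ℝ) × ℝ => p z'.1 z'.2) (y, t) ((0 : Fin d → ℝ), (1:ℝ))
        + ∑ j, u y t j
            * fderiv ℝ (fun z' : (Fin d → ℝ) × ℝ => p z'.1 z'.2) (y, t) (Pi.single j 1, 0) :=
      funext fun y => hqQQ (y, t)
    rw [hfun]
    exact pd_slice hQL i
  rw [hterm1, hterm4]
  simp only [hterm2, hterm3a, hterm3b]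
  -- combine the first two groups into LW (u x t, 1)
  have hcombine : LW ((0 : Fin d → ℝ), (1:ℝ))
      + ∑ k, u x t k * LW ((Pi.single k 1 : Fin d → ℝ), (0:ℝ)) = LW (u x t, 1) := by
    rw [clm_pair_apply LW (u x t) 1]
    simp [smul_eq_mul]
  -- transported second-derivative identities in scalar form
  have hA2' : ∀ j : Fin d,
      (fderiv ℝ (fderiv ℝ (fun z' : (Fin d → ℝ) × ℝ => A z'.1 z'.2 j)) (x, t)) (u x t, 1)
        (Pi.single i 1, 0)
      = -∑ k, fderiv ℝ (fun z' : (Fin d → ℝ) × ℝ => u z'.1 z'.2 k) (x, t) (Pi.single i 1, 0)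
          * fderiv ℝ (fun z' : (Fin d → ℝ) × ℝ => A z'.1 z'.2 j) (x, t) (Pi.single k 1, 0) := by
    intro j
    rw [hsymA j (u x t, 1) (Pi.single i 1, 0), hI2 j,
      clm_pair_apply (fderiv ℝ (fun z' : (Fin d → ℝ) × ℝ => A z'.1 z'.2 j) (x, t))
        (fderiv ℝ (fun z : (Fin d → ℝ) × ℝ => u z.1 z.2) (x, t) (Pi.single i 1, 0)) 0]
    simp only [zero_smul, smul_eq_mul, neg_inj, zero_mul, zero_add]
    refine Finset.sum_congr rfl fun k _ => ?_
    congr 1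
    rw [fderiv_component (hud (x, t)) k]
    rfl
  have hP2' :
      (fderiv ℝ (fderiv ℝ (fun z' : (Fin d → ℝ) × ℝ => p z'.1 z'.2)) (x, t)) (u x t, 1)
        (Pi.single i 1, 0)
      = (fderiv ℝ (fderiv ℝ (fun z' : (Fin d → ℝ) × ℝ => p z'.1 z'.2)) (x, t))
          (Pi.single i 1, 0) ((0 : Fin d → ℝ), (1:ℝ))
        + ∑ k, u x t k * (fderiv ℝ (fderiv ℝ (fun z' : (Fin d → ℝ) × ℝ => p z'.1 z'.2)) (x, t))
            (Pi.single i 1, 0) (Pi.single k 1, 0) := by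
    rw [hsymP (u x t, 1) (Pi.single i 1, 0),
      clm_pair_apply ((fderiv ℝ (fderiv ℝ (fun z' : (Fin d → ℝ) × ℝ => p z'.1 z'.2)) (x, t))
        (Pi.single i 1, 0)) (u x t) 1]
    simp [smul_eq_mul]
  rw [hcombine]
  simp only [hLWdef, hLQdef, ContinuousLinearMap.sub_apply, ContinuousLinearMap.add_apply,
    ContinuousLinearMap.sum_apply, ContinuousLinearMap.smul_apply, ContinuousLinearMap.comp_apply,
    ContinuousLinearMap.flip_apply, ContinuousLinearMap.zero_apply, map_zero, smul_eq_mul,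
    zero_add, add_zero]
  simp only [hA2', hP2', hNval]
  exact final_algebra i (u x t) (f x t) (φ (A x t) t)
    (fun j => fderiv ℝ (fun z' : (Fin d → ℝ) × ℝ => A z'.1 z'.2 j) (x, t) (Pi.single i 1, 0))
    (fun k => fderiv ℝ (fun z' : (Fin d → ℝ) × ℝ => u z'.1 z'.2 k) (x, t) (Pi.single i 1, 0))
    (fun j => fderiv ℝ (fun z' : (Fin d → ℝ) × ℝ => p z'.1 z'.2) (x, t) (Pi.single j 1, 0))
    (fun k => (fderiv ℝ (fderiv ℝ (fun z' : (Fin d → ℝ) × ℝ => p z'.1 z'.2)) (x, t))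
        (Pi.single i 1, 0) (Pi.single k 1, 0))
    (fun j k => fderiv ℝ (fun z' : (Fin d → ℝ) × ℝ => A z'.1 z'.2 j) (x, t) (Pi.single k 1, 0))
    (fun k j => fderiv ℝ (fun z' : (Fin d → ℝ) × ℝ => X z'.1 z'.2 k) (A x t, t) (Pi.single j 1, 0))
    ((fderiv ℝ (fderiv ℝ (fun z' : (Fin d → ℝ) × ℝ => p z'.1 z'.2)) (x, t))
        (Pi.single i 1, 0) ((0 : Fin d → ℝ), (1:ℝ)))
    hKX

end main
end
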